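/- arXiv:1101.3523 — 9 statements merged into one kernel-verified Lean document; each statement's English description precedes it below -/
import Mathlib

section
/- Let X be a compact metric space, Γ a monoid acting minimally on X by continuous maps, and H a real separable Hilbert space. Let (Ψ, ρ) be a continuous cocycle of affine isometries of H over this action. If there exist a point x₀ ∈ X, a vector v₀ ∈ H and a constant C ≥ 0 such that ‖Ψ(f,x₀)(v₀) + ρ(f,x₀)‖ ≤ C for every f ∈ Γ, then there exists a continuous map φ : X → H such that φ(f·x) = Ψ(f,x)(φ(x)) + ρ(f,x) for all f ∈ Γ and all x ∈ X. -/
/-!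
Write `a f = I(f,x₀) v₀` for the bounded orbit and, for `x ∈ X`, let `R_x(v)` be the
limsup of `‖v - a f‖²` as `f • x₀ → x`. In a Hilbert space `R_x` is continuous and
2-strongly convex, so it has a unique minimiser `φ x` (the asymptotic centre of the orbit
at `x`). The cocycle identity gives `a (g f) ≈ I(g,x) (a f)` when `f • x₀` is near `x`,
whence `R_x(v) ≤ R_{g x}(I(g,x) v)`: the minimal value of `R_x` is nondecreasing along
orbits. It is also upper semicontinuous in `x`, so by minimality it is constant.
Uniqueness of minimisers then forces `φ (g x) = I(g,x) (φ x)`, and strong convexity with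
upper semicontinuity makes `φ` continuous.
-/

open Filter Topology Set Function

section StrongConvexity

variable {E : Type*} [NormedAddCommGroup E] [NormedSpace ℝ E] {f : E → ℝ} {k m : ℝ}

theorem StrongConvexOn.mul_sq_norm_sub_le (hf : StrongConvexOn univ k f) (hm : ∀ v, m ≤ f v)
    (u w : E) : k * ‖u - w‖ ^ 2 ≤ 4 * (f u - m + (f w - m)) := by
  have hmid := hf.2 (mem_univ u) (mem_univ w) (by norm_num : (0 : ℝ) ≤ 1 / 2)
    (by norm_num : (0 : ℝ) ≤ 1 / 2) (by norm_num)
  have := hm ((1 / 2 : ℝ) • u + (1 / 2 : ℝ) • w)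
  simp only [smul_eq_mul] at hmid
  linarith

theorem StrongConvexOn.eq_of_le (hf : StrongConvexOn univ k f) (hk : 0 < k) {u w : E}
    (hu : ∀ v, f u ≤ f v) (hw : f w ≤ f u) : w = u := by
  have := hf.mul_sq_norm_sub_le hu w u
  have : ‖w - u‖ ^ 2 ≤ 0 := by nlinarith
  simpa [sub_eq_zero] using this

theorem StrongConvexOn.exists_forall_le [CompleteSpace E] (hf : StrongConvexOn univ k f)
    (hk : 0 < k) (hc : Continuous f) (hb : BddBelow (range f)) : ∃ u, ∀ v, f u ≤ f v := by
  obtain ⟨y, -, hy, hyf⟩ := exists_seq_tendsto_sInf (range_nonempty f) hb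
  choose v hv using hyf
  obtain rfl : f ∘ v = y := funext hv
  set m := sInf (range f)
  have hm : ∀ w, m ≤ f w := fun w => csInf_le hb ⟨w, rfl⟩
  have hgap : Tendsto (fun n => f (v n) - m) atTop (𝓝 0) := by simpa using hy.sub_const m
  have hcauchy : CauchySeq v := by
    rw [cauchySeq_iff_tendsto_dist_atTop_0]
    have hbound : Tendsto (fun p : ℕ × ℕ => √(4 / k * (f (v p.1) - m + (f (v p.2) - m))))
        atTop (𝓝 0) := by
      rw [← prod_atTop_atTop_eq]
      simpa using
        (((hgap.comp tendsto_fst).add (hgap.comp tendsto_snd)).const_mul (4 / k)).sqrt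
    refine squeeze_zero (fun _ => dist_nonneg) (fun p => ?_) hbound
    rw [Real.le_sqrt dist_nonneg (by have := hm (v p.1); have := hm (v p.2); positivity),
      dist_eq_norm, div_mul_eq_mul_div, le_div_iff₀' hk]
    exact hf.mul_sq_norm_sub_le hm _ _
  obtain ⟨u, hu⟩ := cauchySeq_tendsto_of_complete hcauchy
  have : f u = m := tendsto_nhds_unique ((hc.tendsto u).comp hu) hy
  exact ⟨u, fun w => this ▸ hm w⟩

theorem continuous_of_forall_le_of_upperSemicontinuous {X : Type*} [TopologicalSpace X]
    {F : X → E → ℝ} (hF : ∀ x, StrongConvexOn univ k (F x)) (hk : 0 < k)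
    (husc : ∀ v, UpperSemicontinuous fun x => F x v) {φ : X → E} (hφ : ∀ x v, F x (φ x) ≤ F x v)
    (hconst : ∀ x y, F x (φ x) = F y (φ y)) : Continuous φ := by
  refine continuous_iff_continuousAt.2 fun x => Metric.tendsto_nhds.2 fun ε hε => ?_
  have hx : F x (φ x) < F x (φ x) + k * ε ^ 2 / 4 := lt_add_of_pos_right _ (by positivity)
  filter_upwards [husc (φ x) x _ hx] with y hy
  have hclose := (hF y).mul_sq_norm_sub_le (hφ y) (φ y) (φ x)
  rw [hconst y x] at hclose
  rw [dist_eq_norm]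
  exact lt_of_pow_lt_pow_left₀ 2 hε.le (by nlinarith)

end StrongConvexity

theorem UpperSemicontinuous.eq_of_le_act {X Γ β : Type*} [TopologicalSpace X] [LinearOrder β]
    {M : X → β} (hM : UpperSemicontinuous M) {act : Γ → X → X}
    (hle : ∀ g x, M x ≤ M (act g x)) (hmin : ∀ x, Dense (range fun g => act g x)) (x y : X) :
    M x = M y := by
  suffices key : ∀ x y, M y ≤ M x from (key y x).antisymm (key x y)
  intro x y
  refine le_of_forall_gt fun c hc => ?_
  obtain ⟨g, hg⟩ := DenseRange.mem_nhds (hmin y) (hM x c hc)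
  exact (hle g y).trans_lt hg

theorem continuous_and_equivariant_of_transport {X Γ E : Type*} [TopologicalSpace X]
    [NormedAddCommGroup E] [NormedSpace ℝ E] {k : ℝ} {F : X → E → ℝ}
    (hF : ∀ x, StrongConvexOn univ k (F x)) (hk : 0 < k)
    (husc : ∀ v, UpperSemicontinuous fun x => F x v) {act : Γ → X → X}
    (hmin : ∀ x, Dense (range fun g => act g x)) {I : Γ → X → E → E}
    (hI : ∀ g x, Surjective (I g x)) (htrans : ∀ g x v, F x v ≤ F (act g x) (I g x v))
    {φ : X → E} (hφ : ∀ x v, F x (φ x) ≤ F x v) :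
    Continuous φ ∧ ∀ g x, φ (act g x) = I g x (φ x) := by
  have hle : ∀ g x, F x (φ x) ≤ F (act g x) (φ (act g x)) := fun g x => by
    obtain ⟨v, hv⟩ := hI g x (φ (act g x))
    exact (hφ x v).trans (hv ▸ htrans g x v)
  have husc' : UpperSemicontinuous fun x => F x (φ x) := fun x t ht =>
    (husc (φ x) x t ht).mono fun y hy => (hφ y (φ x)).trans_lt hy
  have hconst := husc'.eq_of_le_act hle hmin
  refine ⟨continuous_of_forall_le_of_upperSemicontinuous hF hk husc hφ hconst, fun g x => ?_⟩
  obtain ⟨v, hv⟩ := hI g x (φ (act g x))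
  have hvmin : F x v ≤ F x (φ x) := by
    calc F x v ≤ F (act g x) (I g x v) := htrans g x v
      _ = F x (φ x) := by rw [hv, hconst]
  rw [← hv, (hF x).eq_of_le hk (hφ x) hvmin]

section AsymptoticRadius

variable {ι E : Type*} [NormedAddCommGroup E] {l : Filter ι} {a : ι → E} {C : ℝ}

/-- The square of Edelstein's asymptotic radius of `a` along `l` about `v`. -/
noncomputable def asymptoticRadiusSq (l : Filter ι) (a : ι → E) (v : E) : ℝ :=
  limsup (fun i => ‖v - a i‖ ^ 2) l

theorem isBoundedUnder_sq_norm_sub (ha : ∀ i, ‖a i‖ ≤ C) (v : E) :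
    IsBoundedUnder (· ≤ ·) l fun i => ‖v - a i‖ ^ 2 :=
  isBoundedUnder_of ⟨(‖v‖ + C) ^ 2, fun i => by
    gcongr; exact (norm_sub_le _ _).trans (by gcongr; exact ha i)⟩

theorem asymptoticRadiusSq_le_of_eventually [l.NeBot] {v : E} {t : ℝ}
    (h : ∀ᶠ i in l, ‖v - a i‖ ^ 2 ≤ t) : asymptoticRadiusSq l a v ≤ t :=
  limsup_le_of_le (isCoboundedUnder_le_of_le l fun _ => sq_nonneg _) h

theorem eventually_lt_of_asymptoticRadiusSq_lt (ha : ∀ i, ‖a i‖ ≤ C) {v : E} {t : ℝ}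
    (h : asymptoticRadiusSq l a v < t) : ∀ᶠ i in l, ‖v - a i‖ ^ 2 < t :=
  eventually_lt_of_limsup_lt h (isBoundedUnder_sq_norm_sub ha v)

theorem asymptoticRadiusSq_nonneg [l.NeBot] (ha : ∀ i, ‖a i‖ ≤ C) (v : E) :
    0 ≤ asymptoticRadiusSq l a v :=
  le_limsup_of_frequently_le (Frequently.of_forall fun _ => sq_nonneg _)
    (isBoundedUnder_sq_norm_sub ha v)

theorem lipschitzWith_sqrt_asymptoticRadiusSq [l.NeBot] (ha : ∀ i, ‖a i‖ ≤ C) :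
    LipschitzWith 1 fun v => √(asymptoticRadiusSq l a v) := by
  refine LipschitzWith.of_le_add fun u v => ?_
  rw [← sub_le_iff_le_add]
  refine le_of_forall_gt_imp_ge_of_dense fun t ht => ?_
  have ht0 : 0 < t := (Real.sqrt_nonneg _).trans_lt ht
  rw [sub_le_iff_le_add, Real.sqrt_le_iff]
  refine ⟨by positivity, asymptoticRadiusSq_le_of_eventually ?_⟩
  filter_upwards [eventually_lt_of_asymptoticRadiusSq_lt ha ((Real.sqrt_lt' ht0).1 ht)] with i hi
  have hv : ‖v - a i‖ < t := lt_of_pow_lt_pow_left₀ 2 ht0.le hi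
  have hu : ‖u - a i‖ ≤ dist u v + ‖v - a i‖ := by
    rw [dist_eq_norm]; exact norm_sub_le_norm_sub_add_norm_sub u v (a i)
  gcongr
  linarith

theorem continuous_asymptoticRadiusSq [l.NeBot] (ha : ∀ i, ‖a i‖ ≤ C) :
    Continuous (asymptoticRadiusSq l a) :=
  ((lipschitzWith_sqrt_asymptoticRadiusSq ha).continuous.pow 2).congr fun v =>
    Real.sq_sqrt (asymptoticRadiusSq_nonneg ha v)

theorem norm_smul_add_smul_sub_sq [InnerProductSpace ℝ E] {s t : ℝ} (hst : s + t = 1)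
    (u w z : E) :
    ‖s • u + t • w - z‖ ^ 2 = s * ‖u - z‖ ^ 2 + t * ‖w - z‖ ^ 2 - s * t * ‖u - w‖ ^ 2 := by
  obtain rfl : t = 1 - s := by linarith
  have h₁ : s • u + (1 - s) • w - z = s • (u - z) + (1 - s) • (w - z) := by module
  have h₂ : u - w = (u - z) - (w - z) := by abel
  rw [h₁, h₂, norm_add_sq_real, norm_sub_sq_real (u - z), norm_smul, norm_smul,
    real_inner_smul_left, real_inner_smul_right, mul_pow, mul_pow, Real.norm_eq_abs,
    Real.norm_eq_abs, sq_abs, sq_abs]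
  ring

theorem strongConvexOn_asymptoticRadiusSq [InnerProductSpace ℝ E] [l.NeBot]
    (ha : ∀ i, ‖a i‖ ≤ C) : StrongConvexOn univ 2 (asymptoticRadiusSq l a) := by
  refine ⟨convex_univ, fun u _ w _ s t hs ht hst => ?_⟩
  refine le_of_forall_pos_le_add fun δ hδ => asymptoticRadiusSq_le_of_eventually ?_
  filter_upwards [eventually_lt_of_asymptoticRadiusSq_lt ha (lt_add_of_pos_right _ hδ) (v := u),
    eventually_lt_of_asymptoticRadiusSq_lt ha (lt_add_of_pos_right _ hδ) (v := w)] with i hu hw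
  rw [norm_smul_add_smul_sub_sq hst]
  simp only [smul_eq_mul]
  nlinarith [mul_le_mul_of_nonneg_left hu.le hs, mul_le_mul_of_nonneg_left hw.le ht]

theorem asymptoticRadiusSq_le_of_tendsto {l' : Filter ι} [l.NeBot] (ha : ∀ i, ‖a i‖ ≤ C)
    {σ : ι → ι} (hσ : Tendsto σ l l') {J : E → E} (hJ : Isometry J)
    (hJa : Tendsto (fun i => ‖J (a i) - a (σ i)‖) l (𝓝 0)) (v : E) :
    asymptoticRadiusSq l a v ≤ asymptoticRadiusSq l' a (J v) := by
  set K := ‖v‖ + ‖J v‖ + 2 * C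
  refine le_of_forall_pos_le_add fun δ hδ => asymptoticRadiusSq_le_of_eventually ?_
  have hsmall : ∀ᶠ i in l, ‖J (a i) - a (σ i)‖ * K < δ / 2 := by
    have : Tendsto (fun i => ‖J (a i) - a (σ i)‖ * K) l (𝓝 0) := by
      simpa using hJa.mul_const K
    exact this.eventually (gt_mem_nhds (half_pos hδ))
  filter_upwards [hσ.eventually (eventually_lt_of_asymptoticRadiusSq_lt ha
    (lt_add_of_pos_right _ (half_pos hδ)) (v := J v)), hsmall] with i hi hsmall
  have hiso : ‖v - a i‖ = ‖J v - J (a i)‖ := by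
    rw [← dist_eq_norm, ← dist_eq_norm, hJ.dist_eq]
  have htri : ‖v - a i‖ ≤ ‖J v - a (σ i)‖ + ‖J (a i) - a (σ i)‖ := by
    rw [hiso, norm_sub_rev (J (a i))]; exact norm_sub_le_norm_sub_add_norm_sub _ _ _
  have hsum : ‖v - a i‖ + ‖J v - a (σ i)‖ ≤ K := by
    linarith [norm_sub_le v (a i), norm_sub_le (J v) (a (σ i)), ha i, ha (σ i)]
  -- `‖v - a i‖² - ‖J v - a (σ i)‖²` is the difference of the norms times their sum `≤ K`
  nlinarith [mul_nonneg (sub_nonneg.2 htri)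
      (add_nonneg (norm_nonneg (v - a i)) (norm_nonneg (J v - a (σ i)))),
    mul_nonneg (norm_nonneg (J (a i) - a (σ i))) (sub_nonneg.2 hsum)]

end AsymptoticRadius

theorem DenseRange.comap_nhds_neBot {X Γ : Type*} [TopologicalSpace X] {π : Γ → X}
    (hπ : DenseRange π) (x : X) : (comap π (𝓝 x)).NeBot :=
  comap_neBot_iff.2 fun _ => hπ.mem_nhds

section OrbitRadius

variable {X Γ E : Type*} [TopologicalSpace X] [NormedAddCommGroup E] {π : Γ → X} {a : Γ → E}
  {C : ℝ}

theorem upperSemicontinuous_asymptoticRadiusSq_comap_nhds (hπ : DenseRange π)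
    (ha : ∀ i, ‖a i‖ ≤ C) (v : E) :
    UpperSemicontinuous fun x => asymptoticRadiusSq (comap π (𝓝 x)) a v := by
  intro x t ht
  obtain ⟨s, hs, hst⟩ := exists_between ht
  have hnear := eventually_comap.1 (eventually_lt_of_asymptoticRadiusSq_lt ha hs)
  filter_upwards [hnear.eventually_nhds] with y hy
  have := hπ.comap_nhds_neBot y
  exact (asymptoticRadiusSq_le_of_eventually
    ((eventually_comap.2 hy).mono fun _ h => h.le)).trans_lt hst

theorem asymptoticRadiusSq_comap_nhds_le_affine [NormedSpace ℝ E] (hπ : DenseRange π)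
    (ha : ∀ i, ‖a i‖ ≤ C) {T : X → X} (hT : Continuous T) {σ : Γ → Γ}
    (hπσ : ∀ i, π (σ i) = T (π i)) {L : X → E ≃ₗᵢ[ℝ] E}
    (hL : Continuous fun x => ((L x).toLinearIsometry.toContinuousLinearMap : E →L[ℝ] E))
    {c : X → E} (hc : Continuous c) (haσ : ∀ i, a (σ i) = L (π i) (a i) + c (π i))
    (x : X) (v : E) :
    asymptoticRadiusSq (comap π (𝓝 x)) a v ≤
      asymptoticRadiusSq (comap π (𝓝 (T x))) a (L x v + c x) := by
  have := hπ.comap_nhds_neBot x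
  refine asymptoticRadiusSq_le_of_tendsto ha (σ := σ) (J := fun w => L x w + c x) ?_ ?_ ?_ v
  · rw [tendsto_comap_iff, show π ∘ σ = T ∘ π from funext hπσ]
    exact (hT.tendsto x).comp tendsto_comap
  · exact (IsometryEquiv.addRight (c x)).isometry.comp (L x).isometry
  · set A := fun y => ((L y).toLinearIsometry.toContinuousLinearMap : E →L[ℝ] E)
    have hlim : Tendsto (fun y => ‖A x - A y‖ * C + ‖c x - c y‖) (𝓝 x) (𝓝 0) := by
      have hcont : Continuous fun y => ‖A x - A y‖ * C + ‖c x - c y‖ :=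
        ((continuous_const.sub hL).norm.mul_const C).add (continuous_const.sub hc).norm
      simpa using hcont.tendsto x
    refine squeeze_zero (fun _ => norm_nonneg _) (fun i => ?_) (hlim.comp tendsto_comap)
    calc ‖L x (a i) + c x - a (σ i)‖ = ‖(A x - A (π i)) (a i) + (c x - c (π i))‖ := by
          rw [haσ]; congr 1; simp [A]; abel
      _ ≤ ‖A x - A (π i)‖ * C + ‖c x - c (π i)‖ := by
          refine norm_add_le_of_le ((ContinuousLinearMap.le_opNorm _ _).trans ?_) le_rfl
          gcongr; exact ha i

end OrbitRadius

theorem main_theorem_hilbert_general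
    {X : Type*} [MetricSpace X]
    {Γ : Type*} [Monoid Γ]
    {H : Type*} [NormedAddCommGroup H] [InnerProductSpace ℝ H] [CompleteSpace H]
    (act : Γ → X → X)
    (hact_mul : ∀ f g x, act (f * g) x = act f (act g x))
    (hact_cont : ∀ f, Continuous (act f))
    (hmin : ∀ x, Dense (Set.range fun f => act f x))
    (Ψ : Γ → X → (H ≃ₗᵢ[ℝ] H)) (ρ : Γ → X → H)
    (hΨ_cont : ∀ f, Continuous fun x =>
      ((Ψ f x).toLinearIsometry.toContinuousLinearMap : H →L[ℝ] H))
    (hρ_cont : ∀ f, Continuous fun x => ρ f x)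
    (hΨ_coc : ∀ f g x v, Ψ (f * g) x v = Ψ f (act g x) (Ψ g x v))
    (hρ_coc : ∀ f g x, ρ (f * g) x = ρ f (act g x) + Ψ f (act g x) (ρ g x))
    (x₀ : X) (v₀ : H) (C : ℝ)
    (hbound : ∀ f, ‖Ψ f x₀ v₀ + ρ f x₀‖ ≤ C) :
    ∃ φ : X → H, Continuous φ ∧ ∀ f x, φ (act f x) = Ψ f x (φ x) + ρ f x := by
  set π : Γ → X := fun f => act f x₀
  set a : Γ → H := fun f => Ψ f x₀ v₀ + ρ f x₀
  have hπ : DenseRange π := hmin x₀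
  have hF (x : X) : StrongConvexOn univ 2 (asymptoticRadiusSq (comap π (𝓝 x)) a) :=
    have := hπ.comap_nhds_neBot x
    strongConvexOn_asymptoticRadiusSq hbound
  choose φ hφ using fun x =>
    have := hπ.comap_nhds_neBot x
    (hF x).exists_forall_le two_pos (continuous_asymptoticRadiusSq hbound)
      ⟨0, forall_mem_range.2 (asymptoticRadiusSq_nonneg hbound)⟩
  refine ⟨φ, continuous_and_equivariant_of_transport hF two_pos
    (upperSemicontinuous_asymptoticRadiusSq_comap_nhds hπ hbound) hmin
    (I := fun g x v => Ψ g x v + ρ g x) (fun g x w => ⟨(Ψ g x).symm (w - ρ g x), by simp⟩)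
    (fun g x v => ?_) hφ⟩
  refine asymptoticRadiusSq_comap_nhds_le_affine hπ hbound (hact_cont g) (σ := (g * ·))
    (fun f => hact_mul g f x₀) (hΨ_cont g) (hρ_cont g) (fun f => ?_) x v
  simp only [π, hΨ_coc, hρ_coc, map_add]
  abel

/-- **Main Theorem** (Hilbert space fibers): a continuous cocycle of affine isometries of a
real separable Hilbert space over a minimal monoid action on a compact metric space that has
a bounded orbit admits a continuous invariant section. -/
theorem main_theorem_hilbert
    {X : Type*} [MetricSpace X] [CompactSpace X]
    {Γ : Type*} [Monoid Γ]
    {H : Type*} [NormedAddCommGroup H] [InnerProductSpace ℝ H] [CompleteSpace H]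
    [TopologicalSpace.SeparableSpace H]
    (act : Γ → X → X)
    (hact_one : ∀ x, act 1 x = x)
    (hact_mul : ∀ f g x, act (f * g) x = act f (act g x))
    (hact_cont : ∀ f, Continuous (act f))
    (hmin : ∀ x, Dense (Set.range fun f => act f x))
    (Ψ : Γ → X → (H ≃ₗᵢ[ℝ] H)) (ρ : Γ → X → H)
    (hΨ_cont : ∀ f, Continuous fun x =>
      ((Ψ f x).toLinearIsometry.toContinuousLinearMap : H →L[ℝ] H))
    (hρ_cont : ∀ f, Continuous fun x => ρ f x)
    (hΨ_coc : ∀ f g x v, Ψ (f * g) x v = Ψ f (act g x) (Ψ g x v))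
    (hρ_coc : ∀ f g x, ρ (f * g) x = ρ f (act g x) + Ψ f (act g x) (ρ g x))
    (x₀ : X) (v₀ : H) (C : ℝ) (hC : 0 ≤ C)
    (hbound : ∀ f, ‖Ψ f x₀ v₀ + ρ f x₀‖ ≤ C) :
    ∃ φ : X → H, Continuous φ ∧ ∀ f x, φ (act f x) = Ψ f x (φ x) + ρ f x :=
  main_theorem_hilbert_general act hact_mul hact_cont hmin Ψ ρ hΨ_cont hρ_cont hΨ_coc hρ_coc x₀ v₀ C
    hbound
end

section
/- Let X be a compact metric space, Γ a monoid acting minimally on X by continuous maps, and A : Γ × X → GL(n,ℝ) a continuous linear cocycle over this action. Assume there exist a point x₀ ∈ X and a constant C > 0 such that for all f ∈ Γ, max(‖A(f,x₀)‖, ‖A(f,x₀)⁻¹‖) ≤ C. Then A is cohomologous to an orthogonal cocycle: there exists a continuous map B : X → GL(n,ℝ) such that for all x ∈ X and all f ∈ Γ, the matrix B(f·x)⁻¹ · A(f,x) · B(x) lies in the orthogonal group O(n,ℝ). -/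
/-!
On the orbit of `x₀` the cocycle is a product `A(fg, x₀) A(g, x₀)⁻¹` of two values at `x₀`, so the
bound passes to the closure of that orbit, which is all of `X`. At each `x` let `P x` be the
positive semidefinite matrix of maximal determinant lying below every `A(g, x)ᵀ A(g, x)` (the
minimal-volume ellipsoid containing all the ellipsoids `A(g, x)⁻¹ (unit ball)`); the uniform bounds
make it exist with `det P x > 0`, and strict log-concavity of the determinant makes it unique.
Since `A(gf, x) = A(g, f x) A(f, x)`, conjugating by `A(f, x)` turns the problem at `f x` into a
relaxation of the problem at `x`, whence `det P x ≤ (det A(f, x))² det P (f x)`. The same holds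
for the contragredient cocycle `(A⁻¹)ᵀ` with its maximiser `P'`, and multiplying the two cancels
`det A`: the upper semicontinuous function `det P · det P'` is nondecreasing along orbits, hence
constant by minimality. This forces `A(f, x)ᵀ P (f x) A(f, x) = P x` and makes `det P`, hence `P`,
continuous, and `B = P^(-1/2)` conjugates `A` into the orthogonal group.
-/

open Filter Topology Set
open scoped MatrixOrder

theorem Filter.Tendsto.mapClusterPt_prodMk {α X Y : Type*} [TopologicalSpace X]
    [TopologicalSpace Y] {F : Filter α} {f : α → X} {g : α → Y} {x : X} {y : Y}
    (hf : Tendsto f F (𝓝 x)) (hg : MapClusterPt y F g) :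
    MapClusterPt (x, y) F fun a => (f a, g a) := by
  rw [((𝓝 x).basis_sets.prod_nhds (𝓝 y).basis_sets).mapClusterPt_iff_frequently]
  rintro ⟨s, t⟩ ⟨hs, ht⟩
  exact ((mapClusterPt_iff_frequently.mp hg t ht).and_eventually (hf hs)).mono
    fun a h => ⟨h.2, h.1⟩

section Semicontinuity

variable {X : Type*} [TopologicalSpace X]

theorem UpperSemicontinuous.mul_of_nonneg {f g : X → ℝ} (hf : UpperSemicontinuous f)
    (hg : UpperSemicontinuous g) (hf0 : ∀ x, 0 ≤ f x) (hg0 : ∀ x, 0 ≤ g x) :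
    UpperSemicontinuous fun x => f x * g x := by
  intro x y hy
  obtain ⟨ε, hεy, hε⟩ : ∃ ε, (f x + ε) * (g x + ε) < y ∧ 0 < ε := by
    have hcont : Tendsto (fun ε => (f x + ε) * (g x + ε)) (𝓝[>] 0) (𝓝 (f x * g x)) := by
      have : Continuous fun ε : ℝ => (f x + ε) * (g x + ε) := by fun_prop
      simpa using (this.tendsto 0).mono_left nhdsWithin_le_nhds
    exact ((hcont.eventually (gt_mem_nhds hy)).and self_mem_nhdsWithin).exists
  filter_upwards [hf x _ (lt_add_of_pos_right _ hε), hg x _ (lt_add_of_pos_right _ hε)]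
    with x' hfx hgx
  exact (mul_le_mul hfx.le hgx.le (hg0 x') ((hf0 x).trans (le_add_of_nonneg_right hε.le))
    ).trans_lt hεy

theorem UpperSemicontinuous.lowerSemicontinuous_const_div {g : X → ℝ}
    (hg : UpperSemicontinuous g) (hg0 : ∀ x, 0 < g x) {a : ℝ} (ha : 0 < a) :
    LowerSemicontinuous fun x => a / g x := by
  intro x y hy
  rcases le_or_gt y 0 with hy0 | hy0
  · exact .of_forall fun x' => hy0.trans_lt (div_pos ha (hg0 x'))
  · have hlt : g x < a / y := by
      rwa [lt_div_iff₀ hy0, mul_comm, ← lt_div_iff₀ (hg0 x)]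
    filter_upwards [hg x _ hlt] with x' hx'
    show y < a / g x'
    rwa [lt_div_iff₀ (hg0 x'), mul_comm, ← lt_div_iff₀ hy0]

theorem UpperSemicontinuous.continuous_of_mul_eq_const {f g : X → ℝ} (hf : UpperSemicontinuous f)
    (hg : UpperSemicontinuous g) (hf0 : ∀ x, 0 < f x) (hg0 : ∀ x, 0 < g x)
    (hfg : ∀ x y, f x * g x = f y * g y) : Continuous f := by
  refine continuous_iff_lower_upperSemicontinuous.2 ⟨fun x => ?_, hf⟩
  have hquot : f = fun y => f x * g x / g y := by
    funext y
    rw [hfg x y, mul_div_cancel_right₀ _ (hg0 y).ne']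
  rw [hquot]
  exact hg.lowerSemicontinuous_const_div hg0 (mul_pos (hf0 x) (hg0 x)) x

theorem UpperSemicontinuous.eq_of_le_of_dense_orbits {Γ γ : Type*} [LinearOrder γ] {act : Γ → X → X}
    {φ : X → γ} (hφ : UpperSemicontinuous φ) (hmin : ∀ x, Dense (range fun f => act f x))
    (hle : ∀ f x, φ x ≤ φ (act f x)) (x y : X) : φ x = φ y := by
  have key (x y : X) : φ x ≤ φ y :=
    (hφ.isClosed_preimage (φ x)).closure_subset_iff.2 (range_subset_iff.2 fun f => hle f x)
      ((hmin x).closure_eq ▸ mem_univ y)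
  exact le_antisymm (key x y) (key y x)

end Semicontinuity

namespace Matrix

variable {ι : Type*} [Fintype ι]

theorem isClosed_setOf_posSemidef : IsClosed {M : Matrix ι ι ℝ | M.PosSemidef} := by
  simp only [posSemidef_iff_dotProduct_mulVec, IsHermitian, ofPred_and, ofPred_forall]
  exact (isClosed_eq continuous_id.matrix_conjTranspose continuous_id).inter
    (isClosed_iInter fun x => isClosed_le continuous_const
      (continuous_const.dotProduct (continuous_id.matrix_mulVec continuous_const)))

instance : OrderClosedTopology (Matrix ι ι ℝ) :=
  ⟨isClosed_le_of_isClosed_nonneg <| by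
    simpa only [nonneg_iff_posSemidef] using isClosed_setOf_posSemidef⟩

omit [Fintype ι] in
theorem PosSemidef.sq_apply_le {Q : Matrix ι ι ℝ} (hQ : Q.PosSemidef) (i j : ι) :
    Q i j ^ 2 ≤ Q i i * Q j j := by
  have hdet := (hQ.submatrix ![i, j]).det_nonneg
  have hsymm : Q j i = Q i j := by simpa using congrFun (congrFun hQ.1 i) j
  simp only [det_fin_two, submatrix_apply, Matrix.cons_val_zero, Matrix.cons_val_one, hsymm] at hdet
  nlinarith

theorem isCompact_Icc_zero (B : Matrix ι ι ℝ) : IsCompact (Icc 0 B) := by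
  have hbox : IsCompact (X := Matrix ι ι ℝ) (univ.pi fun i => univ.pi fun j =>
      Icc (-√(B i i * B j j)) √(B i i * B j j)) :=
    isCompact_univ_pi fun i => isCompact_univ_pi fun j => isCompact_Icc
  refine hbox.of_isClosed_subset isClosed_Icc fun Q ⟨hQ, hQB⟩ => ?_
  rw [nonneg_iff_posSemidef] at hQ
  rw [le_iff] at hQB
  have hdiag (k : ι) : Q k k ≤ B k k := by simpa using hQB.diag_nonneg (i := k)
  refine mem_univ_pi.2 fun i => mem_univ_pi.2 fun j => ?_
  rw [mem_Icc, ← abs_le]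
  refine Real.abs_le_sqrt ((hQ.sq_apply_le i j).trans ?_)
  exact mul_le_mul (hdiag i) (hdiag j) hQ.diag_nonneg (hQ.diag_nonneg.trans (hdiag i))

instance : CompactIccSpace (Matrix ι ι ℝ) where
  isCompact_Icc {a b} := by
    simpa [image_add_const_Icc] using (isCompact_Icc_zero (b - a)).image (continuous_add_const a)

variable [DecidableEq ι]

section L2Operator

open scoped Matrix.Norms.L2Operator

theorem star_mul_self_le_smul_one {M : Matrix ι ι ℝ} {c : ℝ} (h : ‖M‖ ≤ c) :
    star M * M ≤ (c ^ 2) • (1 : Matrix ι ι ℝ) := by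
  -- `spectrum.norm_le_norm_of_mem` needs `‖1‖ = 1`, which fails for empty `ι`
  cases isEmpty_or_nonempty ι
  · exact (Subsingleton.elim _ _).le
  rw [← Algebra.algebraMap_eq_smul_one]
  refine le_algebraMap_of_spectrum_le fun r hr => ?_
  calc r ≤ ‖star M * M‖ := (Real.le_norm_self r).trans (spectrum.norm_le_norm_of_mem hr)
    _ = ‖M‖ ^ 2 := by rw [CStarRing.norm_star_mul_self, sq]
    _ ≤ c ^ 2 := pow_le_pow_left₀ (norm_nonneg M) h 2

theorem smul_one_le_star_mul_self (u : GL ι ℝ) {c : ℝ} (hc : 0 < c)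
    (h : ‖(↑u⁻¹ : Matrix ι ι ℝ)‖ ≤ c) :
    (c⁻¹ ^ 2) • (1 : Matrix ι ι ℝ) ≤ star (u : Matrix ι ι ℝ) * u := by
  have hconj := star_left_conjugate_le_conjugate (star_mul_self_le_smul_one h) (u : Matrix ι ι ℝ)
  rw [← mul_assoc, ← star_mul, mul_assoc, u.inv_mul, star_one, mul_one, mul_smul_comm, mul_one,
    smul_mul_assoc] at hconj
  calc (c⁻¹ ^ 2) • (1 : Matrix ι ι ℝ) ≤ (c⁻¹ ^ 2) • (c ^ 2) • (star (u : Matrix ι ι ℝ) * u) :=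
        smul_le_smul_of_nonneg_left hconj (by positivity)
    _ = star (u : Matrix ι ι ℝ) * u := by
      rw [smul_smul, ← mul_pow, inv_mul_cancel₀ hc.ne', one_pow, one_smul]

theorem _root_.Continuous.matrix_cfcSqrt {Y : Type*} [TopologicalSpace Y] {P : Y → Matrix ι ι ℝ}
    (hP : Continuous P) (hP0 : ∀ y, 0 ≤ P y) : Continuous fun y => CFC.sqrt (P y) :=
  CFC.continuousOn_sqrt.comp_continuous hP hP0

end L2Operator

theorem continuous_coe_inv_of_continuous {Y : Type*} [TopologicalSpace Y] {u : Y → GL ι ℝ}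
    (hu : Continuous fun y => (u y : Matrix ι ι ℝ)) :
    Continuous fun y => (↑(u y)⁻¹ : Matrix ι ι ℝ) := by
  simp only [coe_units_inv]
  refine continuous_iff_continuousAt.2 fun y => ContinuousAt.comp ?_ hu.continuousAt
  refine continuousAt_matrix_inv _ ?_
  rw [Ring.inverse_eq_inv']
  exact continuousAt_inv₀ (isUnits_det_units (u y)).ne_zero

theorem IsHermitian.det_one_add {M : Matrix ι ι ℝ} (hM : M.IsHermitian) :
    (1 + M).det = ∏ i, (1 + hM.eigenvalues i) := by
  set U := hM.eigenvectorUnitary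
  have hdiag : 1 + M = U * diagonal (fun i => 1 + hM.eigenvalues i) * star (U : Matrix ι ι ℝ) := by
    conv_lhs => rw [hM.spectral_theorem, ← map_one (Unitary.conjStarAlgAut ℝ _ U), ← map_add]
    rw [Unitary.conjStarAlgAut_apply, ← diagonal_one, Function.comp_def, diagonal_add]
    rfl
  rw [hdiag, det_mul, det_mul, mul_right_comm, ← det_mul, mem_unitaryGroup_iff.mp U.2, det_one,
    one_mul, det_diagonal]

theorem PosDef.det_lt_det_half_one_add_sq {M : Matrix ι ι ℝ} (hM : M.PosDef) (hne : M ≠ 1) :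
    M.det < ((1 / 2 : ℝ) • (1 + M)).det ^ 2 := by
  set ev := hM.1.eigenvalues
  obtain ⟨i, hi⟩ : ∃ i, ev i ≠ 1 := by
    by_contra! h
    refine hne (hM.1.spectral_theorem.trans ?_)
    rw [show (RCLike.ofReal ∘ ev : ι → ℝ) = fun _ => 1 from funext h, diagonal_one, map_one]
  rw [det_smul, hM.1.det_one_add, hM.1.det_eq_prod_eigenvalues, ← Finset.card_univ,
    ← Finset.prod_const, ← Finset.prod_mul_distrib, ← Finset.prod_pow]
  refine Finset.prod_lt_prod (fun j _ => hM.eigenvalues_pos j) (fun j _ => ?_)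
    ⟨i, Finset.mem_univ i, ?_⟩
  · simp only [RCLike.ofReal_real_eq_id, id]
    nlinarith [sq_nonneg (ev j - 1)]
  · have : 0 < (ev i - 1) ^ 2 := by positivity [sub_ne_zero.mpr hi]
    simp only [RCLike.ofReal_real_eq_id, id]
    nlinarith

theorem det_star_mul_mul (S X : Matrix ι ι ℝ) : (star S * X * S).det = S.det ^ 2 * X.det := by
  rw [det_mul, det_mul, star_eq_conjTranspose, det_conjTranspose, star_trivial]
  ring

theorem PosDef.det_mul_det_lt_det_midpoint_sq {P Q : Matrix ι ι ℝ} (hP : P.PosDef)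
    (hQ : Q.PosDef) (hne : P ≠ Q) :
    P.det * Q.det < ((1 / 2 : ℝ) • (P + Q)).det ^ 2 := by
  -- congruence by a square root of `P` reduces to the case `P = 1`
  set S := CFC.sqrt P
  have hSu : IsUnit S := IsStrictlyPositive.isUnit_cfcSqrt P hP.isStrictlyPositive
  have hPS : P = star S * 1 * S := by
    rw [mul_one, (CFC.sqrt_nonneg P).isSelfAdjoint.star_eq, CFC.sqrt_mul_sqrt_self P]
  set T := S⁻¹
  have hTS : T * S = 1 := nonsing_inv_mul S ((isUnit_iff_isUnit_det S).mp hSu)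
  set M := star T * Q * T
  have hQS : Q = star S * M * S := by
    simp only [M, ← mul_assoc, ← star_mul, hTS, star_one, one_mul]
    rw [mul_assoc, hTS, mul_one]
  have hM : M.PosDef :=
    (IsUnit.posDef_star_left_conjugate_iff (isUnit_nonsing_inv_iff.mpr hSu)).mpr hQ
  have hMne : M ≠ 1 := fun h => hne (by rw [hPS, hQS, h])
  have hmid : (1 / 2 : ℝ) • (P + Q) = star S * ((1 / 2 : ℝ) • (1 + M)) * S := by
    rw [hPS, hQS, ← add_mul, ← mul_add, mul_smul_comm, smul_mul_assoc]
  have hd : 0 < S.det ^ 2 := by positivity [((isUnit_iff_isUnit_det S).mp hSu).ne_zero]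
  rw [hmid, det_star_mul_mul, hPS, hQS, det_star_mul_mul, det_star_mul_mul, det_one]
  nlinarith [mul_lt_mul_of_pos_left (hM.det_lt_det_half_one_add_sq hMne) (mul_pos hd hd)]

theorem star_mul_star_mul_mul_of_mul_eq_one {A B : Matrix ι ι ℝ} (h : A * B = 1)
    (X : Matrix ι ι ℝ) : star B * (star A * X * A) * B = X := by
  rw [← mul_assoc, ← mul_assoc, ← star_mul, h, star_one, one_mul, mul_assoc, h, mul_one]

theorem det_sq_mul_det_star_inv_sq (u : GL ι ℝ) :
    (u : Matrix ι ι ℝ).det ^ 2 * (↑(star u⁻¹) : Matrix ι ι ℝ).det ^ 2 = 1 := by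
  rw [← mul_pow, Units.coe_star, star_eq_conjTranspose, det_conjTranspose, star_trivial,
    ← det_mul, u.mul_inv, det_one, one_pow]

theorem sqrt_mul_mul_inv_sqrt_mem_orthogonalGroup {P P' M : Matrix ι ι ℝ} (hP : P.PosDef)
    (hP' : 0 ≤ P') (h : star M * P' * M = P) :
    CFC.sqrt P' * M * (CFC.sqrt P)⁻¹ ∈ orthogonalGroup ι ℝ := by
  rw [mem_orthogonalGroup_iff']
  set S := CFC.sqrt P
  have hSu : IsUnit S.det :=
    (isUnit_iff_isUnit_det S).mp (IsStrictlyPositive.isUnit_cfcSqrt P hP.isStrictlyPositive)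
  calc star (CFC.sqrt P' * M * S⁻¹) * (CFC.sqrt P' * M * S⁻¹)
      = star S⁻¹ * (star M * (star (CFC.sqrt P') * CFC.sqrt P') * M) * S⁻¹ := by
        simp only [star_mul, mul_assoc]
    _ = star S⁻¹ * (star S * 1 * S) * S⁻¹ := by
        rw [(CFC.sqrt_nonneg P').isSelfAdjoint.star_eq, CFC.sqrt_mul_sqrt_self P' hP', h, mul_one,
          (CFC.sqrt_nonneg P).isSelfAdjoint.star_eq, CFC.sqrt_mul_sqrt_self P]
    _ = 1 := star_mul_star_mul_mul_of_mul_eq_one (mul_nonsing_inv S hSu) 1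

section LowerBounds

variable {κ κ' : Type*}

def psdLowerBounds (H : κ → Matrix ι ι ℝ) : Set (Matrix ι ι ℝ) := {Q | 0 ≤ Q ∧ ∀ k, Q ≤ H k}

omit [Fintype ι] [DecidableEq ι] in
@[simp]
theorem mem_psdLowerBounds {H : κ → Matrix ι ι ℝ} {Q : Matrix ι ι ℝ} :
    Q ∈ psdLowerBounds H ↔ 0 ≤ Q ∧ ∀ k, Q ≤ H k :=
  Iff.rfl

def IsMaxDetLowerBound (H : κ → Matrix ι ι ℝ) (P : Matrix ι ι ℝ) : Prop :=
  P ∈ psdLowerBounds H ∧ ∀ Q ∈ psdLowerBounds H, Q.det ≤ P.det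

variable {H : κ → Matrix ι ι ℝ} {K : κ' → Matrix ι ι ℝ} {P Q : Matrix ι ι ℝ}

theorem smul_one_mem_psdLowerBounds {c : ℝ} (hc : 0 ≤ c) (hcH : ∀ k, c • 1 ≤ H k) :
    c • (1 : Matrix ι ι ℝ) ∈ psdLowerBounds H :=
  ⟨smul_nonneg hc zero_le_one, hcH⟩

theorem midpoint_mem_psdLowerBounds (hP : P ∈ psdLowerBounds H) (hQ : Q ∈ psdLowerBounds H) :
    (1 / 2 : ℝ) • (P + Q) ∈ psdLowerBounds H := by
  refine ⟨smul_nonneg (by norm_num) (add_nonneg hP.1 hQ.1), fun k => ?_⟩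
  calc (1 / 2 : ℝ) • (P + Q) ≤ (1 / 2 : ℝ) • (H k + H k) :=
        smul_le_smul_of_nonneg_left (add_le_add (hP.2 k) (hQ.2 k)) (by norm_num)
    _ = H k := by rw [← two_smul ℝ, smul_smul]; norm_num

theorem star_inv_mul_mem_psdLowerBounds {σ : κ' → κ} {B : Matrix ι ι ℝ} (hB : IsUnit B)
    (hHK : ∀ k, star B * K k * B = H (σ k)) (hQ : Q ∈ psdLowerBounds H) :
    star B⁻¹ * Q * B⁻¹ ∈ psdLowerBounds K := by
  refine ⟨star_left_conjugate_nonneg hQ.1 _, fun k => ?_⟩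
  calc star B⁻¹ * Q * B⁻¹ ≤ star B⁻¹ * H (σ k) * B⁻¹ :=
        star_left_conjugate_le_conjugate (hQ.2 _) _
    _ = K k := by
      rw [← hHK]
      exact star_mul_star_mul_mul_of_mul_eq_one
        (mul_nonsing_inv B ((isUnit_iff_isUnit_det B).mp hB)) _

omit [Fintype ι] [DecidableEq ι] in
theorem mem_Icc_of_mem_psdLowerBounds (hQ : Q ∈ psdLowerBounds H) {k : κ} {B : Matrix ι ι ℝ}
    (hB : H k ≤ B) : Q ∈ Icc 0 B :=
  ⟨hQ.1, (hQ.2 k).trans hB⟩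

omit [DecidableEq ι] in
theorem isCompact_psdLowerBounds (k₀ : κ) : IsCompact (psdLowerBounds H) := by
  refine isCompact_Icc.of_isClosed_subset ?_ fun Q hQ =>
    mem_Icc_of_mem_psdLowerBounds hQ (le_refl (H k₀))
  simp only [psdLowerBounds, ofPred_and, ofPred_forall]
  exact isClosed_Ici.inter (isClosed_iInter fun k => isClosed_Iic)

theorem exists_isMaxDetLowerBound [Nonempty κ] (hne : (psdLowerBounds H).Nonempty) :
    ∃ P, IsMaxDetLowerBound H P := by
  obtain ⟨P, hP, hmax⟩ := (isCompact_psdLowerBounds (Classical.arbitrary κ)).exists_isMaxOn hne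
    (continuous_id.matrix_det).continuousOn
  exact ⟨P, hP, hmax⟩

namespace IsMaxDetLowerBound

theorem pow_card_le_det (hP : IsMaxDetLowerBound H P) {c : ℝ} (hc : 0 ≤ c)
    (hcH : ∀ k, c • 1 ≤ H k) : c ^ Fintype.card ι ≤ P.det := by
  simpa using hP.2 _ (smul_one_mem_psdLowerBounds hc hcH)

theorem posDef (hP : IsMaxDetLowerBound H P) (hpos : 0 < P.det) : P.PosDef :=
  (nonneg_iff_posSemidef.mp hP.1.1).posDef_iff_det_ne_zero.mpr hpos.ne'

theorem unique (hP : IsMaxDetLowerBound H P) (hQ : IsMaxDetLowerBound H Q) (hpos : 0 < P.det) :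
    P = Q := by
  by_contra hne
  have hdet : P.det = Q.det := le_antisymm (hQ.2 P hP.1) (hP.2 Q hQ.1)
  have hmid := midpoint_mem_psdLowerBounds hP.1 hQ.1
  have hlt := (hP.posDef hpos).det_mul_det_lt_det_midpoint_sq (hQ.posDef (hdet ▸ hpos)) hne
  have hle := hP.2 _ hmid
  have hnonneg := (nonneg_iff_posSemidef.mp hmid.1).det_nonneg
  nlinarith

variable {σ : κ' → κ} {B : Matrix ι ι ℝ}

theorem det_le_mul_det (hB : IsUnit B) (hHK : ∀ k, star B * K k * B = H (σ k))
    (hP : IsMaxDetLowerBound H P) (hQ : IsMaxDetLowerBound K Q) : P.det ≤ B.det ^ 2 * Q.det := by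
  have hBinv := nonsing_inv_mul B ((isUnit_iff_isUnit_det B).mp hB)
  conv_lhs => rw [← star_mul_star_mul_mul_of_mul_eq_one hBinv P, det_star_mul_mul]
  exact mul_le_mul_of_nonneg_left (hQ.2 _ (star_inv_mul_mem_psdLowerBounds hB hHK hP.1))
    (sq_nonneg _)

theorem eq_star_mul_mul_of_det_eq (hB : IsUnit B) (hHK : ∀ k, star B * K k * B = H (σ k))
    (hP : IsMaxDetLowerBound H P) (hQ : IsMaxDetLowerBound K Q) (hpos : 0 < Q.det)
    (heq : P.det = B.det ^ 2 * Q.det) : P = star B * Q * B := by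
  have hBinv := nonsing_inv_mul B ((isUnit_iff_isUnit_det B).mp hB)
  have hdet : (star B⁻¹ * P * B⁻¹).det = Q.det := by
    rw [← star_mul_star_mul_mul_of_mul_eq_one hBinv P, det_star_mul_mul] at heq
    exact mul_left_cancel₀ (pow_ne_zero 2 ((isUnit_iff_isUnit_det B).mp hB).ne_zero) heq
  have hmax : IsMaxDetLowerBound K (star B⁻¹ * P * B⁻¹) :=
    ⟨star_inv_mul_mem_psdLowerBounds hB hHK hP.1, fun R hR => hdet ▸ hQ.2 R hR⟩
  rw [hQ.unique hmax hpos, star_mul_star_mul_mul_of_mul_eq_one hBinv]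

end IsMaxDetLowerBound

end LowerBounds

section Parametric

variable {κ X : Type*} [TopologicalSpace X] {H : X → κ → Matrix ι ι ℝ} {P : X → Matrix ι ι ℝ}

omit [DecidableEq ι] in
theorem mem_psdLowerBounds_of_mapClusterPt (hH : ∀ k, Continuous fun x => H x k)
    (hP : ∀ x, P x ∈ psdLowerBounds (H x)) {x : X} {L : Matrix ι ι ℝ}
    (hL : MapClusterPt L (𝓝 x) P) : L ∈ psdLowerBounds (H x) := by
  have hclosed : IsClosed ({p | 0 ≤ p.2} ∩ ⋂ k, {p : X × Matrix ι ι ℝ | p.2 ≤ H p.1 k}) :=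
    (isClosed_le continuous_const continuous_snd).inter
      (isClosed_iInter fun k => isClosed_le continuous_snd ((hH k).comp continuous_fst))
  have hmem := hclosed.mem_of_mapClusterPt (tendsto_id.mapClusterPt_prodMk hL)
    (.of_forall fun y => by simpa using hP y)
  simpa using hmem

theorem upperSemicontinuous_det_of_isMaxDetLowerBound [Nonempty κ]
    (hH : ∀ k, Continuous fun x => H x k) {B : Matrix ι ι ℝ} (hB : ∀ x k, H x k ≤ B)
    (hP : ∀ x, IsMaxDetLowerBound (H x) (P x)) : UpperSemicontinuous fun x => (P x).det := by
  intro x y hy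
  by_contra hfreq
  have hK : IsCompact (Icc 0 B ∩ {Q : Matrix ι ι ℝ | y ≤ Q.det}) :=
    isCompact_Icc.inter_right (isClosed_le continuous_const continuous_id.matrix_det)
  obtain ⟨L, ⟨-, hyL⟩, hL⟩ := hK.exists_mapClusterPt_of_frequently <|
    (not_eventually.mp hfreq).mono fun x' h =>
      ⟨mem_Icc_of_mem_psdLowerBounds (hP x').1 (hB x' (Classical.arbitrary κ)), not_lt.mp h⟩
  have hLx := (hP x).2 L (mem_psdLowerBounds_of_mapClusterPt hH (fun x => (hP x).1) hL)
  exact absurd (hyL.trans hLx) (not_le.mpr hy)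

theorem continuous_of_isMaxDetLowerBound [Nonempty κ]
    (hH : ∀ k, Continuous fun x => H x k) {B : Matrix ι ι ℝ} (hB : ∀ x k, H x k ≤ B)
    (hP : ∀ x, IsMaxDetLowerBound (H x) (P x)) (hpos : ∀ x, 0 < (P x).det)
    (hdet : Continuous fun x => (P x).det) : Continuous P := by
  refine continuous_iff_continuousAt.2 fun x =>
    isCompact_Icc.tendsto_nhds_of_unique_mapClusterPt (.of_forall fun x' =>
      mem_Icc_of_mem_psdLowerBounds (hP x').1 (hB x' (Classical.arbitrary κ))) fun L _ hL => ?_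
  have hLmem := mem_psdLowerBounds_of_mapClusterPt hH (fun x => (hP x).1) hL
  have hdetL : L.det = (P x).det := eq_of_nhds_neBot <|
    (hL.continuousAt_comp (continuous_id.matrix_det).continuousAt).clusterPt.mono hdet.continuousAt
  exact ((hP x).unique ⟨hLmem, fun Q hQ => hdetL ▸ (hP x).2 Q hQ⟩ (hpos x)).symm

end Parametric

end Matrix

section Cocycle

open scoped Matrix.Norms.L2Operator

variable {Γ X : Type*}

def IsCocycle {G : Type*} [Mul Γ] [Mul G] (act : Γ → X → X) (A : Γ → X → G) : Prop :=
  ∀ f g x, A (f * g) x = A f (act g x) * A g x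

theorem IsCocycle.star_inv {G : Type*} [Mul Γ] [Group G] [StarMul G] {act : Γ → X → X}
    {A : Γ → X → G} (hA : IsCocycle act A) : IsCocycle act fun f x => star (A f x)⁻¹ := by
  intro f g x
  simp only [hA f g x, mul_inv_rev, star_mul]

variable {ι : Type*} [Fintype ι] [DecidableEq ι] [Mul Γ] {act : Γ → X → X} {A : Γ → X → GL ι ℝ}

theorem IsCocycle.norm_le_of_dense_orbit [TopologicalSpace X] (hA : IsCocycle act A)
    (hcont : ∀ f, Continuous fun x => (A f x : Matrix ι ι ℝ)) {x₀ : X}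
    (hx₀ : Dense (range fun f => act f x₀)) {C : ℝ}
    (hC : ∀ f, ‖(A f x₀ : Matrix ι ι ℝ)‖ ≤ C ∧ ‖(↑(A f x₀)⁻¹ : Matrix ι ι ℝ)‖ ≤ C) (f : Γ) (x : X) :
    ‖(A f x : Matrix ι ι ℝ)‖ ≤ C * C ∧ ‖(↑(A f x)⁻¹ : Matrix ι ι ℝ)‖ ≤ C * C := by
  have hC0 : 0 ≤ C := (norm_nonneg _).trans (hC f).1
  have horbit (g : Γ) : ‖(A f (act g x₀) : Matrix ι ι ℝ)‖ ≤ C * C ∧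
      ‖(↑(A f (act g x₀))⁻¹ : Matrix ι ι ℝ)‖ ≤ C * C := by
    rw [eq_mul_inv_of_mul_eq (hA f g x₀).symm, mul_inv_rev, inv_inv, Units.val_mul, Units.val_mul]
    exact ⟨(norm_mul_le _ _).trans (mul_le_mul (hC _).1 (hC _).2 (norm_nonneg _) hC0),
      (norm_mul_le _ _).trans (mul_le_mul (hC _).1 (hC _).2 (norm_nonneg _) hC0)⟩
  have hclosed : IsClosed {x | ‖(A f x : Matrix ι ι ℝ)‖ ≤ C * C ∧
      ‖(↑(A f x)⁻¹ : Matrix ι ι ℝ)‖ ≤ C * C} :=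
    (isClosed_le (continuous_norm.comp (hcont f)) continuous_const).inter
      (isClosed_le (continuous_norm.comp (Matrix.continuous_coe_inv_of_continuous (hcont f)))
        continuous_const)
  exact hclosed.closure_subset_iff.2 (range_subset_iff.2 horbit) (hx₀.closure_eq ▸ mem_univ x)

def gramFamily (A : Γ → X → GL ι ℝ) (x : X) (g : Γ) : Matrix ι ι ℝ :=
  star (A g x : Matrix ι ι ℝ) * A g x

theorem IsCocycle.star_mul_gramFamily_mul (hA : IsCocycle act A) (f g : Γ) (x : X) :
    star (A f x : Matrix ι ι ℝ) * gramFamily A (act f x) g * A f x = gramFamily A x (g * f) := by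
  simp only [gramFamily, hA g f x, Units.val_mul, star_mul, mul_assoc]

theorem IsCocycle.det_le_mul_det_of_isMaxDetLowerBound (hA : IsCocycle act A) {P : X → Matrix ι ι ℝ}
    (hP : ∀ x, Matrix.IsMaxDetLowerBound (gramFamily A x) (P x)) (f : Γ) (x : X) :
    (P x).det ≤ (A f x : Matrix ι ι ℝ).det ^ 2 * (P (act f x)).det :=
  (hP x).det_le_mul_det (A f x).isUnit (hA.star_mul_gramFamily_mul f · x) (hP (act f x))

omit [Mul Γ] in
theorem exists_isMaxDetLowerBound_gramFamily [TopologicalSpace X] [Nonempty Γ]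
    (hcont : ∀ f, Continuous fun x => (A f x : Matrix ι ι ℝ)) {c : ℝ} (hc : 0 < c)
    (hbound : ∀ f x, ‖(A f x : Matrix ι ι ℝ)‖ ≤ c ∧ ‖(↑(A f x)⁻¹ : Matrix ι ι ℝ)‖ ≤ c) :
    ∃ P : X → Matrix ι ι ℝ, (∀ x, Matrix.IsMaxDetLowerBound (gramFamily A x) (P x)) ∧
      (∀ x, 0 < (P x).det) ∧ UpperSemicontinuous fun x => (P x).det := by
  have hlow (x : X) (g : Γ) : (c⁻¹ ^ 2) • 1 ≤ gramFamily A x g :=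
    Matrix.smul_one_le_star_mul_self _ hc (hbound g x).2
  have hup (x : X) (g : Γ) : gramFamily A x g ≤ (c ^ 2) • 1 :=
    Matrix.star_mul_self_le_smul_one (hbound g x).1
  choose P hP using fun x => Matrix.exists_isMaxDetLowerBound
    ⟨_, Matrix.smul_one_mem_psdLowerBounds (by positivity) (hlow x)⟩
  refine ⟨P, hP, fun x => ?_, Matrix.upperSemicontinuous_det_of_isMaxDetLowerBound
    (fun g => (hcont g).star.mul (hcont g)) hup hP⟩
  exact (pow_pos (by positivity) _).trans_le ((hP x).pow_card_le_det (by positivity) (hlow x))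

theorem IsCocycle.det_mul_det_le (hA : IsCocycle act A) {P P' : X → Matrix ι ι ℝ}
    (hP : ∀ x, Matrix.IsMaxDetLowerBound (gramFamily A x) (P x))
    (hP' : ∀ x, Matrix.IsMaxDetLowerBound (gramFamily (fun f x => star (A f x)⁻¹) x) (P' x))
    (hpos : ∀ x, 0 < (P x).det) (hpos' : ∀ x, 0 < (P' x).det) (f : Γ) (x : X) :
    (P x).det * (P' x).det ≤ (P (act f x)).det * (P' (act f x)).det := by
  calc (P x).det * (P' x).det
      ≤ ((A f x : Matrix ι ι ℝ).det ^ 2 * (P (act f x)).det) *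
          ((↑(star (A f x)⁻¹) : Matrix ι ι ℝ).det ^ 2 * (P' (act f x)).det) :=
        mul_le_mul (hA.det_le_mul_det_of_isMaxDetLowerBound hP f x)
          (hA.star_inv.det_le_mul_det_of_isMaxDetLowerBound hP' f x) (hpos' x).le
          (mul_nonneg (sq_nonneg _) (hpos _).le)
    _ = (P (act f x)).det * (P' (act f x)).det := by
      linear_combination (P (act f x)).det * (P' (act f x)).det *
        Matrix.det_sq_mul_det_star_inv_sq (A f x)

theorem IsCocycle.det_eq_mul_det_of_det_mul_det_eq (hA : IsCocycle act A)
    {P P' : X → Matrix ι ι ℝ} (hP : ∀ x, Matrix.IsMaxDetLowerBound (gramFamily A x) (P x))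
    (hP' : ∀ x, Matrix.IsMaxDetLowerBound (gramFamily (fun f x => star (A f x)⁻¹) x) (P' x))
    (hpos : ∀ x, 0 < (P x).det) (hpos' : ∀ x, 0 < (P' x).det) {f : Γ} {x : X}
    (h : (P x).det * (P' x).det = (P (act f x)).det * (P' (act f x)).det) :
    (P x).det = (A f x : Matrix ι ι ℝ).det ^ 2 * (P (act f x)).det := by
  have h1 := hA.det_le_mul_det_of_isMaxDetLowerBound hP f x
  have h2 := hA.star_inv.det_le_mul_det_of_isMaxDetLowerBound hP' f x
  have hprod : (A f x : Matrix ι ι ℝ).det ^ 2 * (P (act f x)).det *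
      ((↑(star (A f x)⁻¹) : Matrix ι ι ℝ).det ^ 2 * (P' (act f x)).det) =
      (P (act f x)).det * (P' (act f x)).det := by
    linear_combination (P (act f x)).det * (P' (act f x)).det *
      Matrix.det_sq_mul_det_star_inv_sq (A f x)
  refine le_antisymm h1 (not_lt.mp fun hlt => ?_)
  nlinarith [mul_lt_mul_of_pos_right hlt (hpos' x), mul_le_mul_of_nonneg_left h2
    (mul_nonneg (sq_nonneg (A f x : Matrix ι ι ℝ).det) (hpos (act f x)).le)]

theorem IsCocycle.exists_continuous_posDef_invariant [TopologicalSpace X] [Nonempty Γ]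
    (hA : IsCocycle act A) (hcont : ∀ f, Continuous fun x => (A f x : Matrix ι ι ℝ))
    (hmin : ∀ x, Dense (range fun f => act f x)) {c : ℝ} (hc : 0 < c)
    (hbound : ∀ f x, ‖(A f x : Matrix ι ι ℝ)‖ ≤ c ∧ ‖(↑(A f x)⁻¹ : Matrix ι ι ℝ)‖ ≤ c) :
    ∃ P : X → Matrix ι ι ℝ, Continuous P ∧ (∀ x, (P x).PosDef) ∧
      ∀ f x, star (A f x : Matrix ι ι ℝ) * P (act f x) * A f x = P x := by
  obtain ⟨P, hP, hpos, husc⟩ := exists_isMaxDetLowerBound_gramFamily hcont hc hbound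
  obtain ⟨P', hP', hpos', husc'⟩ :=
    exists_isMaxDetLowerBound_gramFamily (A := fun f x => star (A f x)⁻¹)
    (fun f => by simpa using (Matrix.continuous_coe_inv_of_continuous (hcont f)).star) hc
    (fun f x => by simpa [norm_star] using (hbound f x).symm)
  have hconst := (husc.mul_of_nonneg husc' (fun x => (hpos x).le) (fun x => (hpos' x).le)
    ).eq_of_le_of_dense_orbits hmin (hA.det_mul_det_le hP hP' hpos hpos')
  refine ⟨P, Matrix.continuous_of_isMaxDetLowerBound (fun g => (hcont g).star.mul (hcont g))
    (fun x g => Matrix.star_mul_self_le_smul_one (hbound g x).1) hP hpos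
    (husc.continuous_of_mul_eq_const husc' hpos hpos' hconst), fun x => (hP x).posDef (hpos x),
    fun f x => ?_⟩
  exact ((hP x).eq_star_mul_mul_of_det_eq (A f x).isUnit (hA.star_mul_gramFamily_mul f · x)
    (hP (act f x)) (hpos _)
    (hA.det_eq_mul_det_of_det_mul_det_eq hP hP' hpos hpos' (hconst x (act f x)))).symm

end Cocycle

theorem bounded_linear_cocycle_cohomologous_to_orthogonal_general
    {X : Type*} [MetricSpace X]
    {Γ : Type*} [Monoid Γ] {n : ℕ}
    (act : Γ → X → X)
    (hmin : ∀ x, Dense (Set.range fun f => act f x))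
    (A : Γ → X → Matrix.GeneralLinearGroup (Fin n) ℝ)
    (hA_cont : ∀ f, Continuous fun x => (A f x : Matrix (Fin n) (Fin n) ℝ))
    (hA_coc : ∀ f g x, A (f * g) x = A f (act g x) * A g x)
    (x₀ : X) (C : ℝ) (hC : 0 < C)
    (hbound : ∀ f,
      max ‖Matrix.toEuclideanCLM (𝕜 := ℝ) (A f x₀ : Matrix (Fin n) (Fin n) ℝ)‖
          ‖Matrix.toEuclideanCLM (𝕜 := ℝ) ((A f x₀)⁻¹ : Matrix (Fin n) (Fin n) ℝ)‖ ≤ C) :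
    ∃ B : X → Matrix.GeneralLinearGroup (Fin n) ℝ,
      Continuous (fun x => (B x : Matrix (Fin n) (Fin n) ℝ)) ∧
      ∀ f x, ((B (act f x))⁻¹ * A f x * B x : Matrix (Fin n) (Fin n) ℝ) ∈
        Matrix.orthogonalGroup (Fin n) ℝ := by
  obtain ⟨P, hPcont, hPpos, hPinv⟩ := IsCocycle.exists_continuous_posDef_invariant hA_coc hA_cont
    hmin (mul_pos hC hC)
    (IsCocycle.norm_le_of_dense_orbit hA_coc hA_cont (hmin x₀) fun f => by
      simpa only [Matrix.l2_opNorm_toEuclideanCLM, Matrix.coe_units_inv, max_le_iff] using hbound f)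
  have hS (x : X) : IsUnit (CFC.sqrt (P x)) :=
    IsStrictlyPositive.isUnit_cfcSqrt (P x) (hPpos x).isStrictlyPositive
  refine ⟨fun x => (hS x).unit⁻¹, Matrix.continuous_coe_inv_of_continuous ?_, fun f x => ?_⟩
  · exact hPcont.matrix_cfcSqrt fun x => (hPpos x).posSemidef.nonneg
  · simpa [Matrix.coe_units_inv] using Matrix.sqrt_mul_mul_inv_sqrt_mem_orthogonalGroup (hPpos x)
      (hPpos (act f x)).posSemidef.nonneg (hPinv f x)

/-- **Theorem A**: a linear cocycle over a minimal dynamics that is bounded (together with its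
inverse) at some point is cohomologous to a cocycle taking values in the orthogonal group. -/
theorem bounded_linear_cocycle_cohomologous_to_orthogonal
    {X : Type*} [MetricSpace X] [CompactSpace X]
    {Γ : Type*} [Monoid Γ] {n : ℕ}
    (act : Γ → X → X)
    (hact_one : ∀ x, act 1 x = x)
    (hact_mul : ∀ f g x, act (f * g) x = act f (act g x))
    (hact_cont : ∀ f, Continuous (act f))
    (hmin : ∀ x, Dense (Set.range fun f => act f x))
    (A : Γ → X → Matrix.GeneralLinearGroup (Fin n) ℝ)
    (hA_cont : ∀ f, Continuous fun x => (A f x : Matrix (Fin n) (Fin n) ℝ))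
    (hA_coc : ∀ f g x, A (f * g) x = A f (act g x) * A g x)
    (x₀ : X) (C : ℝ) (hC : 0 < C)
    (hbound : ∀ f,
      max ‖Matrix.toEuclideanCLM (𝕜 := ℝ) (A f x₀ : Matrix (Fin n) (Fin n) ℝ)‖
          ‖Matrix.toEuclideanCLM (𝕜 := ℝ) ((A f x₀)⁻¹ : Matrix (Fin n) (Fin n) ℝ)‖ ≤ C) :
    ∃ B : X → Matrix.GeneralLinearGroup (Fin n) ℝ,
      Continuous (fun x => (B x : Matrix (Fin n) (Fin n) ℝ)) ∧
      ∀ f x, ((B (act f x))⁻¹ * A f x * B x : Matrix (Fin n) (Fin n) ℝ) ∈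
        Matrix.orthogonalGroup (Fin n) ℝ :=
  bounded_linear_cocycle_cohomologous_to_orthogonal_general act hmin A hA_cont hA_coc x₀ C hC hbound
end

section
/- Let X be a compact metric space, G a group acting minimally on X by homeomorphisms, and H a real separable Hilbert space. Let (Ψ, ρ) be a continuous cocycle of affine isometries of H over this action, and consider the induced affine isometric action of G on the space C(X,H) of continuous H-valued functions, given by (I(g)φ)(x) = Ψ(g,g⁻¹·x)(φ(g⁻¹·x)) + ρ(g,g⁻¹·x). If this action has a bounded orbit — that is, there exist a continuous φ₁ : X → H and a constant C ≥ 0 such that ‖Ψ(g,x)(φ₁(x)) + ρ(g,x)‖ ≤ C for all g ∈ G and x ∈ X — then it has a fixed point: there exists a continuous φ₀ : X → H such that φ₀(g·x) = Ψ(g,x)(φ₀(x)) + ρ(g,x) for all g ∈ G and x ∈ X. -/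
/-!
For each `x`, the orbit `g ↦ (I(g)φ₁)(x)` is a bounded family in `H`; by the parallelogram law
it has a unique Chebyshev center `c x`, the center of the smallest closed ball containing it.
The cocycle identities say that the families at `x` and at `g • x` differ by the affine isometry
`v ↦ Ψ(g, x) v + ρ(g, x)` (and a reindexing), so `c` satisfies the fixed-point equation and the
Chebyshev radius `r x` is `G`-invariant. The radius of a family is the limit of the radii of its
finite subfamilies; hence `r` is lower semicontinuous, and so constant by minimality. Finally,
when the radius does not jump up at `x`, the parallelogram law for a large finite subfamily at `x`
forces the centers at nearby points to be close to `c x`, so `c` is continuous.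
-/

open Filter Topology Set Bornology

section Metric

variable {ι ι' E F : Type*} [PseudoMetricSpace E] [PseudoMetricSpace F] {f : ι → E}

noncomputable def supDist (f : ι → E) (v : E) : ℝ := ⨆ i, dist v (f i)

noncomputable def chebyshevRadius (f : ι → E) : ℝ := ⨅ v, supDist f v

def IsChebyshevCenter (f : ι → E) (c : E) : Prop := supDist f c = chebyshevRadius f

theorem supDist_nonneg (f : ι → E) (v : E) : 0 ≤ supDist f v :=
  Real.iSup_nonneg fun _ => dist_nonneg

theorem chebyshevRadius_nonneg (f : ι → E) : 0 ≤ chebyshevRadius f :=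
  Real.iInf_nonneg fun v => supDist_nonneg f v

theorem dist_le_supDist (hf : IsBounded (range f)) (v : E) (i : ι) :
    dist v (f i) ≤ supDist f v := by
  obtain ⟨R, hR⟩ := hf.subset_closedBall v
  refine le_ciSup (f := fun i => dist v (f i)) ⟨R, forall_mem_range.2 fun j => ?_⟩ i
  simpa [dist_comm] using hR (mem_range_self j)

theorem supDist_le {v : E} {t : ℝ} (ht : 0 ≤ t) (h : ∀ i, dist v (f i) ≤ t) : supDist f v ≤ t :=
  Real.iSup_le h ht

theorem chebyshevRadius_le_supDist (f : ι → E) (v : E) : chebyshevRadius f ≤ supDist f v :=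
  ciInf_le ⟨0, forall_mem_range.2 (supDist_nonneg f)⟩ v

theorem Bornology.IsBounded.range_comp (hf : IsBounded (range f)) (σ : ι' → ι) :
    IsBounded (range (f ∘ σ)) :=
  hf.subset (range_comp_subset_range σ f)

theorem supDist_comp_le (hf : IsBounded (range f)) (σ : ι' → ι) (v : E) :
    supDist (f ∘ σ) v ≤ supDist f v :=
  supDist_le (supDist_nonneg f v) fun j => dist_le_supDist hf v (σ j)

theorem chebyshevRadius_comp_le [Nonempty E] (hf : IsBounded (range f)) (σ : ι' → ι) :
    chebyshevRadius (f ∘ σ) ≤ chebyshevRadius f :=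
  le_ciInf fun v => (chebyshevRadius_le_supDist _ v).trans (supDist_comp_le hf σ v)

theorem chebyshevRadius_le_add_of_dist_le [Nonempty E] {g : ι → E} {δ : ℝ}
    (hg : IsBounded (range g)) (hδ : 0 ≤ δ) (h : ∀ i, dist (f i) (g i) ≤ δ) :
    chebyshevRadius f ≤ chebyshevRadius g + δ := by
  refine sub_le_iff_le_add.1 (le_ciInf fun v => ?_)
  refine sub_le_iff_le_add.2 ((chebyshevRadius_le_supDist f v).trans ?_)
  refine supDist_le (add_nonneg (supDist_nonneg g v) hδ) fun i => ?_
  calc dist v (f i) ≤ dist v (g i) + dist (g i) (f i) := dist_triangle _ _ _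
    _ ≤ supDist g v + δ := add_le_add (dist_le_supDist hg v i) (dist_comm (f i) (g i) ▸ h i)

theorem supDist_isometryEquiv_comp (T : E ≃ᵢ F) (σ : ι' ≃ ι) (v : E) :
    supDist (T ∘ f ∘ σ) (T v) = supDist f v := by
  simp only [supDist, Function.comp_apply, T.dist_eq]
  exact σ.iSup_comp (g := fun i => dist v (f i))

theorem chebyshevRadius_isometryEquiv_comp (T : E ≃ᵢ F) (σ : ι' ≃ ι) :
    chebyshevRadius (T ∘ f ∘ σ) = chebyshevRadius f := by
  rw [chebyshevRadius, ← T.surjective.iInf_comp]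
  simp only [supDist_isometryEquiv_comp, chebyshevRadius]

theorem chebyshevRadius_finset_le [Nonempty E] (hf : IsBounded (range f)) (s : Finset ι) :
    (chebyshevRadius fun i : s => f i) ≤ chebyshevRadius f :=
  chebyshevRadius_comp_le hf _

theorem monotone_chebyshevRadius_finset [Nonempty E] (hf : IsBounded (range f)) :
    Monotone fun s : Finset ι => chebyshevRadius fun i : s => f i := fun s t hst =>
  chebyshevRadius_comp_le (hf.range_comp ((↑) : t → ι)) fun i : s => (⟨i, hst i.2⟩ : t)

theorem IsChebyshevCenter.isometryEquiv_comp {c : E} (hc : IsChebyshevCenter f c) (T : E ≃ᵢ F)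
    (σ : ι' ≃ ι) : IsChebyshevCenter (T ∘ f ∘ σ) (T c) := by
  rw [IsChebyshevCenter, supDist_isometryEquiv_comp, chebyshevRadius_isometryEquiv_comp]
  exact hc

end Metric

section InnerProductSpace

variable {ι ι' E : Type*} [NormedAddCommGroup E] [InnerProductSpace ℝ E] {f : ι → E}

/-- Apollonius' identity at the midpoint `w` of `u` and `v`, combined with
`chebyshevRadius f ≤ supDist f w`. -/
theorem dist_sq_le_supDist_sq [Nonempty ι] (hf : IsBounded (range f)) (u v : E) :
    dist u v ^ 2 ≤ 2 * supDist f u ^ 2 + 2 * supDist f v ^ 2 - 4 * chebyshevRadius f ^ 2 := by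
  set Q := (2 * supDist f u ^ 2 + 2 * supDist f v ^ 2 - dist u v ^ 2) / 4 with hQ_def
  have hmid : ∀ i, dist (midpoint ℝ u v) (f i) ^ 2 ≤ Q := fun i => by
    have := EuclideanGeometry.dist_sq_add_dist_sq_eq_two_mul_dist_midpoint_sq_add_half_dist_sq
      (f i) u v
    have hu := pow_le_pow_left₀ dist_nonneg (dist_comm u (f i) ▸ dist_le_supDist hf u i) 2
    have hv := pow_le_pow_left₀ dist_nonneg (dist_comm v (f i) ▸ dist_le_supDist hf v i) 2
    rw [hQ_def, dist_comm]
    linarith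
  have hQ : 0 ≤ Q := (sq_nonneg _).trans (hmid (Classical.arbitrary ι))
  have hr : chebyshevRadius f ≤ √Q :=
    (chebyshevRadius_le_supDist f _).trans
      (supDist_le (Real.sqrt_nonneg Q) fun i => (Real.le_sqrt dist_nonneg hQ).2 (hmid i))
  have := pow_le_pow_left₀ (chebyshevRadius_nonneg f) hr 2
  rw [Real.sq_sqrt hQ] at this
  linarith

theorem IsChebyshevCenter.dist_sq_le [Nonempty ι] (hf : IsBounded (range f)) {c : E}
    (hc : IsChebyshevCenter f c) (v : E) :
    dist v c ^ 2 ≤ 2 * supDist f v ^ 2 - 2 * chebyshevRadius f ^ 2 := by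
  have := dist_sq_le_supDist_sq hf v c
  rw [hc] at this
  linarith

theorem IsChebyshevCenter.unique [Nonempty ι] (hf : IsBounded (range f)) {c c' : E}
    (hc : IsChebyshevCenter f c) (hc' : IsChebyshevCenter f c') : c = c' := by
  have := hc'.dist_sq_le hf c
  rw [hc, sub_self] at this
  exact dist_eq_zero.1 ((sq_nonpos_iff _).1 this)

theorem IsChebyshevCenter.dist_sq_le_of_comp [Nonempty ι'] (hf : IsBounded (range f))
    {σ : ι' → ι} {c c' : E} (hc : IsChebyshevCenter f c) (hc' : IsChebyshevCenter (f ∘ σ) c') :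
    dist c c' ^ 2 ≤ 2 * (chebyshevRadius f ^ 2 - chebyshevRadius (f ∘ σ) ^ 2) := by
  have h₁ := hc'.dist_sq_le (hf.range_comp σ) c
  have h₂ := pow_le_pow_left₀ (supDist_nonneg _ _) (supDist_comp_le hf σ c) 2
  rw [hc] at h₂
  linarith

theorem exists_isChebyshevCenter [CompleteSpace E] [Nonempty ι] (hf : IsBounded (range f)) :
    ∃ c, IsChebyshevCenter f c := by
  obtain ⟨a, ha_anti, ha_lim, ha_mem⟩ := exists_seq_tendsto_sInf (range_nonempty (supDist f))
    ⟨0, forall_mem_range.2 (supDist_nonneg f)⟩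
  choose u hu using ha_mem
  set m := chebyshevRadius f
  replace ha_lim : Tendsto a atTop (𝓝 m) := ha_lim
  have hcauchy : CauchySeq u := by
    refine cauchySeq_of_le_tendsto_0' (fun n => √(4 * (a n ^ 2 - m ^ 2))) (fun n k hnk => ?_) ?_
    · have := dist_sq_le_supDist_sq hf (u n) (u k)
      rw [hu, hu] at this
      have := pow_le_pow_left₀ (hu k ▸ supDist_nonneg f (u k)) (ha_anti hnk) 2
      exact Real.le_sqrt_of_sq_le (by linarith)
    · have := (((ha_lim.pow 2).sub_const (m ^ 2)).const_mul 4).sqrt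
      rwa [sub_self, mul_zero, Real.sqrt_zero] at this
  obtain ⟨c, hc⟩ := cauchySeq_tendsto_of_complete hcauchy
  refine ⟨c, le_antisymm (supDist_le (chebyshevRadius_nonneg f) fun i => ?_)
    (chebyshevRadius_le_supDist f c)⟩
  exact le_of_tendsto_of_tendsto' (hc.dist tendsto_const_nhds) ha_lim
    fun n => hu n ▸ dist_le_supDist hf (u n) i

theorem chebyshevRadius_le_iSup_finset [CompleteSpace E] [Nonempty ι]
    (hf : IsBounded (range f)) :
    chebyshevRadius f ≤ ⨆ s : Finset ι, chebyshevRadius fun i : s => f i := by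
  classical
  set R := fun s : Finset ι => chebyshevRadius fun i : s => f i
  set S := ⨆ s, R s
  have hR_bdd : BddAbove (range R) := ⟨_, forall_mem_range.2 (chebyshevRadius_finset_le hf)⟩
  obtain ⟨i₀⟩ := ‹Nonempty ι›
  have hR_lim : Tendsto (fun s => R (insert i₀ s)) atTop (𝓝 S) :=
    (tendsto_atTop_ciSup (monotone_chebyshevRadius_finset hf) hR_bdd).comp
      (tendsto_atTop_mono (Finset.subset_insert i₀) tendsto_id)
  -- `insert i₀` keeps the subfamilies nonempty, so that they have Chebyshev centers.
  choose c hc using fun s : Finset ι =>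
    have : Nonempty ↥(insert i₀ s) := ⟨⟨i₀, Finset.mem_insert_self i₀ s⟩⟩
    exists_isChebyshevCenter (hf.range_comp ((↑) : ↥(insert i₀ s) → ι))
  have hcauchy : CauchySeq c := by
    refine cauchySeq_of_le_tendsto_0' (fun s => √(2 * (S ^ 2 - R (insert i₀ s) ^ 2)))
      (fun s t hst => ?_) ?_
    · have : Nonempty ↥(insert i₀ s) := ⟨⟨i₀, Finset.mem_insert_self i₀ s⟩⟩
      have h₁ : dist (c t) (c s) ^ 2 ≤ 2 * (R (insert i₀ t) ^ 2 - R (insert i₀ s) ^ 2) :=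
        (hc t).dist_sq_le_of_comp (hf.range_comp _)
        (σ := fun i : ↥(insert i₀ s) =>
          (⟨i, Finset.insert_subset_insert i₀ hst i.2⟩ : ↥(insert i₀ t))) (hc s)
      have h₂ : R (insert i₀ t) ^ 2 ≤ S ^ 2 :=
        pow_le_pow_left₀ (chebyshevRadius_nonneg _) (le_ciSup hR_bdd (insert i₀ t)) 2
      rw [dist_comm]
      exact Real.le_sqrt_of_sq_le (by linarith)
    · have := (((hR_lim.pow 2).const_sub (S ^ 2)).const_mul 2).sqrt
      rwa [sub_self, mul_zero, Real.sqrt_zero] at this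
  obtain ⟨c₀, hc₀⟩ := cauchySeq_tendsto_of_complete hcauchy
  refine (chebyshevRadius_le_supDist f c₀).trans
    (supDist_le (Real.iSup_nonneg fun s => chebyshevRadius_nonneg _) fun i => ?_)
  refine le_of_tendsto (hc₀.dist tendsto_const_nhds)
    ((eventually_ge_atTop {i}).mono fun s hs => ?_)
  calc dist (c s) (f i)
      ≤ supDist (fun j : ↥(insert i₀ s) => f j) (c s) :=
        dist_le_supDist (hf.range_comp ((↑) : ↥(insert i₀ s) → ι)) (c s)
          ⟨i, Finset.mem_insert_of_mem (hs (Finset.mem_singleton_self i))⟩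
    _ = R (insert i₀ s) := hc s
    _ ≤ S := le_ciSup hR_bdd _

theorem tendsto_chebyshevRadius_finset [CompleteSpace E] [Nonempty ι]
    (hf : IsBounded (range f)) :
    Tendsto (fun s : Finset ι => chebyshevRadius fun i : s => f i) atTop
      (𝓝 (chebyshevRadius f)) := by
  have hR_le := chebyshevRadius_finset_le hf
  rw [← le_antisymm (ciSup_le hR_le) (chebyshevRadius_le_iSup_finset hf)]
  exact tendsto_atTop_ciSup (monotone_chebyshevRadius_finset hf) ⟨_, forall_mem_range.2 hR_le⟩

section Families

variable [CompleteSpace E] [Nonempty ι] {X : Type*} [TopologicalSpace X] {F : X → ι → E}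

theorem lowerSemicontinuous_chebyshevRadius (hF : ∀ i, Continuous fun x => F x i)
    (hb : ∀ x, IsBounded (range (F x))) : LowerSemicontinuous fun x => chebyshevRadius (F x) := by
  intro x t ht
  obtain ⟨s, hs⟩ := ((tendsto_chebyshevRadius_finset (hb x)).eventually (lt_mem_nhds ht)).exists
  set δ := ((chebyshevRadius fun i : s => F x i) - t) / 2
  have hδ : 0 < δ := half_pos (sub_pos.2 hs)
  filter_upwards [(eventually_all_finset s).2 fun i _ =>
    ((hF i).tendsto x).eventually (Metric.closedBall_mem_nhds _ hδ)] with y hy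
  have h₁ := chebyshevRadius_le_add_of_dist_le (g := fun i : s => F y i) ((hb y).range_comp _)
    hδ.le fun i => dist_comm (F y i) (F x i) ▸ hy i i.2
  have h₂ : (chebyshevRadius fun i : s => F y i) ≤ chebyshevRadius (F y) :=
    chebyshevRadius_comp_le (hb y) _
  simp only [δ] at h₁
  linarith

theorem continuousAt_of_isChebyshevCenter {c : X → E} {x : X}
    (hF : ∀ i, ContinuousAt (fun y => F y i) x) (hb : ∀ y, IsBounded (range (F y)))
    (hr : ∀ᶠ y in 𝓝 x, chebyshevRadius (F y) ≤ chebyshevRadius (F x))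
    (hc : ∀ y, IsChebyshevCenter (F y) (c y)) : ContinuousAt c x := by
  classical
  set m := chebyshevRadius (F x)
  set R := fun s : Finset ι => chebyshevRadius fun i : s => F x i
  have hbound (s : Finset ι) (hs : s.Nonempty) (δ : ℝ) (hδ : 0 < δ) :
      ∀ᶠ y in 𝓝 x, dist (c y) (c x) ^ 2 ≤ 2 * (m + δ) ^ 2 + 2 * m ^ 2 - 4 * R s ^ 2 := by
    filter_upwards [hr, (eventually_all_finset s).2 fun i _ =>
      (hF i).eventually (Metric.closedBall_mem_nhds _ hδ)] with y hry hy
    have : Nonempty s := hs.to_subtype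
    have h₀ : dist (c y) (c x) ^ 2 ≤ 2 * supDist (fun i : s => F x i) (c y) ^ 2
        + 2 * supDist (fun i : s => F x i) (c x) ^ 2 - 4 * R s ^ 2 :=
      dist_sq_le_supDist_sq ((hb x).range_comp _) (c y) (c x)
    have h₁ : supDist (fun i : s => F x i) (c y) ≤ m + δ :=
      supDist_le (by positivity [chebyshevRadius_nonneg (F x)]) fun i =>
        calc dist (c y) (F x i) ≤ dist (c y) (F y i) + dist (F y i) (F x i) := dist_triangle _ _ _
          _ ≤ m + δ := add_le_add ((dist_le_supDist (hb y) _ _).trans ((hc y).trans_le hry))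
            (hy i i.2)
    have h₂ : supDist (fun i : s => F x i) (c x) ≤ m :=
      (supDist_comp_le (hb x) _ (c x)).trans (hc x).le
    have := pow_le_pow_left₀ (supDist_nonneg _ _) h₁ 2
    have := pow_le_pow_left₀ (supDist_nonneg _ _) h₂ 2
    linarith
  have hlim : Tendsto (fun p : Finset ι × ℝ => 2 * (m + p.2) ^ 2 + 2 * m ^ 2 - 4 * R p.1 ^ 2)
      (atTop ×ˢ 𝓝[>] 0) (𝓝 0) := by
    have hδ : Tendsto (fun p : Finset ι × ℝ => p.2) (atTop ×ˢ 𝓝[>] 0) (𝓝 0) :=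
      tendsto_snd.mono_right nhdsWithin_le_nhds
    have hR : Tendsto (fun p : Finset ι × ℝ => R p.1) (atTop ×ˢ 𝓝[>] 0) (𝓝 m) :=
      (tendsto_chebyshevRadius_finset (hb x)).comp tendsto_fst
    convert ((((tendsto_const_nhds.add hδ).pow 2).const_mul 2).add_const (2 * m ^ 2)).sub
      ((hR.pow 2).const_mul 4) using 2
    ring
  rw [ContinuousAt, Metric.tendsto_nhds]
  intro ε hε
  obtain ⟨i₀⟩ := ‹Nonempty ι›
  obtain ⟨⟨s, δ⟩, ⟨hsδ, hs⟩, hδ⟩ := (((hlim.eventually (gt_mem_nhds (pow_pos hε 2))).and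
    (tendsto_fst.eventually (eventually_ge_atTop {i₀}))).and
    (tendsto_snd.eventually self_mem_nhdsWithin)).exists
  filter_upwards [hbound s ⟨i₀, hs (Finset.mem_singleton_self i₀)⟩ δ hδ] with y hy
  exact lt_of_pow_lt_pow_left₀ 2 hε.le (hy.trans_lt hsδ)

end Families

end InnerProductSpace

theorem LowerSemicontinuous.le_of_denseRange {X Y γ : Type*} [TopologicalSpace X] [LinearOrder γ]
    {φ : X → γ} (hφ : LowerSemicontinuous φ) {u : Y → X} (hu : DenseRange u) {t : γ}
    (ht : ∀ y, φ (u y) ≤ t) (x : X) : φ x ≤ t :=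
  (hφ.isClosed_preimage t).closure_subset_iff.2 (range_subset_iff.2 ht) (hu x)

section Cocycle

variable {X G H : Type*} [Group G] [NormedAddCommGroup H] [NormedSpace ℝ H]

noncomputable def cocycleIsometry (Ψ : G → X → (H ≃ₗᵢ[ℝ] H)) (ρ : G → X → H) (g : G) (x : X) :
    H ≃ᵢ H :=
  (Ψ g x).toIsometryEquiv.trans (IsometryEquiv.addRight (ρ g x))

/-- `affineOrbit act Ψ ρ φ x g` is the value at `x` of the image of `φ` under the affine isometry
of `C(X, H)` induced by `g`. -/
def affineOrbit (act : G → X → X) (Ψ : G → X → (H ≃ₗᵢ[ℝ] H)) (ρ : G → X → H) (φ : X → H)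
    (x : X) (g : G) : H :=
  Ψ g (act g⁻¹ x) (φ (act g⁻¹ x)) + ρ g (act g⁻¹ x)

theorem affineOrbit_act {act : G → X → X} (hact_one : ∀ x, act 1 x = x)
    (hact_mul : ∀ g h x, act (g * h) x = act g (act h x)) {Ψ : G → X → (H ≃ₗᵢ[ℝ] H)}
    {ρ : G → X → H} (hΨ_coc : ∀ g h x v, Ψ (g * h) x v = Ψ g (act h x) (Ψ h x v))
    (hρ_coc : ∀ g h x, ρ (g * h) x = ρ g (act h x) + Ψ g (act h x) (ρ h x)) (φ : X → H)
    (h : G) (x : X) :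
    affineOrbit act Ψ ρ φ (act h x) =
      cocycleIsometry Ψ ρ h x ∘ affineOrbit act Ψ ρ φ x ∘ (Equiv.mulLeft h).symm := by
  funext g
  obtain ⟨k, rfl⟩ : ∃ k, g = h * k := ⟨h⁻¹ * g, (mul_inv_cancel_left h g).symm⟩
  have hx : act k (act k⁻¹ x) = x := by rw [← hact_mul, mul_inv_cancel, hact_one]
  have hy : act (h * k)⁻¹ (act h x) = act k⁻¹ x := by
    rw [mul_inv_rev, hact_mul, ← hact_mul h⁻¹, inv_mul_cancel, hact_one]
  simp only [affineOrbit, cocycleIsometry, Function.comp_apply, Equiv.mulLeft_symm_apply,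
    inv_mul_cancel_left, hy, hΨ_coc, hρ_coc, hx, IsometryEquiv.trans_apply,
    IsometryEquiv.addRight_apply, LinearIsometryEquiv.coe_toIsometryEquiv, map_add]
  abel

end Cocycle

theorem bounded_orbit_on_continuous_functions_has_fixed_point_general
    {X : Type*} [MetricSpace X]
    {G : Type*} [Group G]
    {H : Type*} [NormedAddCommGroup H] [InnerProductSpace ℝ H] [CompleteSpace H]
    (act : G → X → X)
    (hact_one : ∀ x, act 1 x = x)
    (hact_mul : ∀ g h x, act (g * h) x = act g (act h x))
    (hact_cont : ∀ g, Continuous (act g))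
    (hmin : ∀ x, Dense (Set.range fun g => act g x))
    (Ψ : G → X → (H ≃ₗᵢ[ℝ] H)) (ρ : G → X → H)
    (hΨ_cont : ∀ g, Continuous fun x =>
      ((Ψ g x).toLinearIsometry.toContinuousLinearMap : H →L[ℝ] H))
    (hρ_cont : ∀ g, Continuous fun x => ρ g x)
    (hΨ_coc : ∀ g h x v, Ψ (g * h) x v = Ψ g (act h x) (Ψ h x v))
    (hρ_coc : ∀ g h x, ρ (g * h) x = ρ g (act h x) + Ψ g (act h x) (ρ h x))
    (φ₁ : X → H) (hφ₁ : Continuous φ₁) (C : ℝ)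
    (hbounded : ∀ g x, ‖Ψ g x (φ₁ x) + ρ g x‖ ≤ C) :
    ∃ φ₀ : X → H, Continuous φ₀ ∧ ∀ g x, φ₀ (act g x) = Ψ g x (φ₀ x) + ρ g x := by
  set orb := affineOrbit act Ψ ρ φ₁
  have orb_bdd (x : X) : IsBounded (range (orb x)) :=
    isBounded_iff_forall_norm_le.2 ⟨C, forall_mem_range.2 fun g => hbounded g _⟩
  have orb_cont (g : G) : Continuous fun x => orb x g :=
    (((hΨ_cont g).comp (hact_cont g⁻¹)).clm_apply (hφ₁.comp (hact_cont g⁻¹))).add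
      ((hρ_cont g).comp (hact_cont g⁻¹))
  have orb_act (g : G) (x : X) :
      orb (act g x) = cocycleIsometry Ψ ρ g x ∘ orb x ∘ (Equiv.mulLeft g).symm :=
    affineOrbit_act hact_one hact_mul hΨ_coc hρ_coc φ₁ g x
  have radius_le (x y : X) : chebyshevRadius (orb x) ≤ chebyshevRadius (orb y) :=
    (lowerSemicontinuous_chebyshevRadius orb_cont orb_bdd).le_of_denseRange (hmin y)
      (fun g => by rw [orb_act, chebyshevRadius_isometryEquiv_comp]) x
  choose cen hcen using fun x => exists_isChebyshevCenter (orb_bdd x)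
  refine ⟨cen, continuous_iff_continuousAt.2 fun x => continuousAt_of_isChebyshevCenter
    (fun g => (orb_cont g).continuousAt) orb_bdd (.of_forall fun y => radius_le y x) hcen,
    fun g x => (hcen (act g x)).unique (orb_bdd _) ?_⟩
  rw [orb_act]
  exact (hcen x).isometryEquiv_comp _ _

/-- **Theorem C**: an affine isometric action on `C(X, H)` induced by a continuous cocycle of
affine isometries over a minimal group action with a bounded orbit has a fixed point. -/
theorem bounded_orbit_on_continuous_functions_has_fixed_point
    {X : Type*} [MetricSpace X] [CompactSpace X]
    {G : Type*} [Group G]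
    {H : Type*} [NormedAddCommGroup H] [InnerProductSpace ℝ H] [CompleteSpace H]
    [TopologicalSpace.SeparableSpace H]
    (act : G → X → X)
    (hact_one : ∀ x, act 1 x = x)
    (hact_mul : ∀ g h x, act (g * h) x = act g (act h x))
    (hact_cont : ∀ g, Continuous (act g))
    (hmin : ∀ x, Dense (Set.range fun g => act g x))
    (Ψ : G → X → (H ≃ₗᵢ[ℝ] H)) (ρ : G → X → H)
    (hΨ_cont : ∀ g, Continuous fun x =>
      ((Ψ g x).toLinearIsometry.toContinuousLinearMap : H →L[ℝ] H))
    (hρ_cont : ∀ g, Continuous fun x => ρ g x)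
    (hΨ_coc : ∀ g h x v, Ψ (g * h) x v = Ψ g (act h x) (Ψ h x v))
    (hρ_coc : ∀ g h x, ρ (g * h) x = ρ g (act h x) + Ψ g (act h x) (ρ h x))
    (φ₁ : X → H) (hφ₁ : Continuous φ₁) (C : ℝ) (hC : 0 ≤ C)
    (hbounded : ∀ g x, ‖Ψ g x (φ₁ x) + ρ g x‖ ≤ C) :
    ∃ φ₀ : X → H, Continuous φ₀ ∧ ∀ g x, φ₀ (act g x) = Ψ g x (φ₀ x) + ρ g x :=
  bounded_orbit_on_continuous_functions_has_fixed_point_general act hact_one hact_mul hact_cont hmin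
    Ψ ρ hΨ_cont hρ_cont hΨ_coc hρ_coc φ₁ hφ₁ C hbounded
end

section
/- Let X be a compact metric space and T : X → X a continuous minimal map (every forward orbit {Tⁿ(x) : n ∈ ℕ} is dense in X). Let ρ : X → ℝ be continuous. If there exist a point x₀ ∈ X and a constant C ≥ 0 such that the alternating sums satisfy |Σ_{k=0}^{n−1} (−1)^k ρ(T^k(x₀))| ≤ C for all n ∈ ℕ, then the cohomological equation φ(T(x)) + φ(x) = ρ(x) has a continuous solution φ : X → ℝ. -/
/-- Bounded alternating Birkhoff sums at one point imply that the cohomological equation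
`φ ∘ T + φ = ρ` has a continuous solution, for a minimal continuous map `T`. -/
theorem alternating_cohomological_equation_continuous_solution
    {X : Type*} [MetricSpace X] [CompactSpace X]
    (T : X → X) (hT_cont : Continuous T)
    (hmin : ∀ x, Dense (Set.range fun n : ℕ => T^[n] x))
    (ρ : X → ℝ) (hρ : Continuous ρ)
    (x₀ : X) (C : ℝ) (hC : 0 ≤ C)
    (hbound : ∀ n : ℕ, |∑ k ∈ Finset.range n, (-1 : ℝ) ^ k * ρ (T^[k] x₀)| ≤ C) :
    ∃ φ : X → ℝ, Continuous φ ∧ ∀ x, φ (T x) + φ x = ρ x := by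
  classical
  set S : ℕ → X → ℝ := fun n x => ∑ k ∈ Finset.range n, (-1 : ℝ) ^ k * ρ (T^[k] x) with hSdef
  -- continuity of partial sums
  have hScont : ∀ n, Continuous (S n) := by
    intro n
    apply continuous_finset_sum
    intro k _
    exact continuous_const.mul (hρ.comp (hT_cont.iterate k))
  -- recurrence : S (n+1) x = ρ x - S n (T x)
  have hrec : ∀ n x, S (n + 1) x = ρ x - S n (T x) := by
    intro n x
    have h := Finset.sum_range_succ' (fun k => (-1 : ℝ) ^ k * ρ (T^[k] x)) n
    simp only [hSdef]
    rw [h]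
    have : ∀ k, (-1 : ℝ) ^ (k + 1) * ρ (T^[k + 1] x) = -((-1 : ℝ) ^ k * ρ (T^[k] (T x))) := by
      intro k
      rw [Function.iterate_succ_apply, pow_succ]
      ring
    rw [Finset.sum_congr rfl fun k _ => this k, Finset.sum_neg_distrib]
    simp
    ring
  -- cocycle identity
  have hcoc : ∀ n m x, S (n + m) x = S n x + (-1 : ℝ) ^ n * S m (T^[n] x) := by
    intro n m x
    simp only [hSdef]
    rw [Finset.sum_range_add, Finset.mul_sum]
    congr 1
    refine Finset.sum_congr rfl fun k _ => ?_
    rw [← Function.iterate_add_apply, Nat.add_comm k n, pow_add]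
    ring
  -- bound everywhere
  have hB : ∀ n x, |S n x| ≤ 2 * C := by
    intro n x
    have horb : ∀ m : ℕ, |S n (T^[m] x₀)| ≤ 2 * C := by
      intro m
      have h := hcoc m n x₀
      have h1 : |(-1 : ℝ) ^ m * S n (T^[m] x₀)| = |S n (T^[m] x₀)| := by
        rw [abs_mul, abs_pow, abs_neg, abs_one, one_pow, one_mul]
      have h2 : (-1 : ℝ) ^ m * S n (T^[m] x₀) = S (m + n) x₀ - S m x₀ := by linarith
      calc |S n (T^[m] x₀)| = |S (m + n) x₀ - S m x₀| := by rw [← h1, h2]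
        _ ≤ |S (m + n) x₀| + |S m x₀| := abs_sub _ _
        _ ≤ C + C := add_le_add (hbound _) (hbound _)
        _ = 2 * C := by ring
    have hcl : IsClosed {y : X | |S n y| ≤ 2 * C} :=
      isClosed_le (continuous_abs.comp (hScont n)) continuous_const
    have hsub : Set.range (fun m : ℕ => T^[m] x₀) ⊆ {y : X | |S n y| ≤ 2 * C} := by
      rintro _ ⟨m, rfl⟩
      exact horb m
    have hx : x ∈ closure (Set.range fun m : ℕ => T^[m] x₀) := by
      rw [(hmin x₀).closure_eq]; trivial
    exact hcl.closure_subset_iff.2 hsub hx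
  -- sup and inf of the partial sums (from n = 1 on)
  set ψ : X → ℝ := fun x => ⨆ n : ℕ, S (n + 1) x with hψdef
  set χ : X → ℝ := fun x => ⨅ n : ℕ, S (n + 1) x with hχdef
  have hbddA : ∀ x, BddAbove (Set.range fun n : ℕ => S (n + 1) x) := by
    intro x
    exact ⟨2 * C, by rintro _ ⟨n, rfl⟩; exact (abs_le.1 (hB _ x)).2⟩
  have hbddB : ∀ x, BddBelow (Set.range fun n : ℕ => S (n + 1) x) := by
    intro x
    exact ⟨-(2 * C), by rintro _ ⟨n, rfl⟩; exact (abs_le.1 (hB _ x)).1⟩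
  have hψle : ∀ x n, S (n + 1) x ≤ ψ x := fun x n => le_ciSup (hbddA x) n
  have hχle : ∀ x n, χ x ≤ S (n + 1) x := fun x n => ciInf_le (hbddB x) n
  -- key inequalities
  have hineq1 : ∀ x, ψ (T x) + χ x ≤ ρ x := by
    intro x
    have h : ψ (T x) ≤ ρ x - χ x := by
      apply ciSup_le
      intro n
      have h1 := hrec (n + 1) x
      have h2 := hχle x (n + 1)
      linarith
    linarith
  have hineq2 : ∀ x, ρ x ≤ ψ x + χ (T x) := by
    intro x
    have h : ρ x - ψ x ≤ χ (T x) := by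
      apply le_ciInf
      intro n
      have h1 := hrec (n + 1) x
      have h2 := hψle x (n + 1)
      linarith
    linarith
  -- the defect D = ψ - χ
  set D : X → ℝ := fun x => ψ x - χ x with hDdef
  have hD0 : ∀ x, 0 ≤ D x := by
    intro x
    have h1 := hψle x 0
    have h2 := hχle x 0
    simp only [hDdef]
    linarith
  have hDmono : ∀ x, D (T x) ≤ D x := by
    intro x
    have h1 := hineq1 x
    have h2 := hineq2 x
    simp only [hDdef]
    linarith
  have hDiter : ∀ (n : ℕ) x, D (T^[n] x) ≤ D x := by
    intro n x
    induction n with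
    | zero => simp
    | succ n ih =>
      rw [Function.iterate_succ_apply']
      exact (hDmono _).trans ih
  -- semicontinuity
  have hψlsc : LowerSemicontinuous ψ :=
    lowerSemicontinuous_ciSup hbddA fun n => (hScont (n + 1)).lowerSemicontinuous
  have hχusc : UpperSemicontinuous χ :=
    upperSemicontinuous_ciInf hbddB fun n => (hScont (n + 1)).upperSemicontinuous
  have hDlsc : LowerSemicontinuous D := by
    intro x y hy
    have hε : (0 : ℝ) < (D x - y) / 2 := by simp only [hDdef] at hy ⊢; linarith
    have h1 : ∀ᶠ z in nhds x, ψ x - (D x - y) / 2 < ψ z :=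
      hψlsc x _ (by linarith)
    have h2 : ∀ᶠ z in nhds x, χ z < χ x + (D x - y) / 2 :=
      hχusc x _ (by linarith)
    filter_upwards [h1, h2] with z hz1 hz2
    simp only [hDdef] at *
    linarith
  -- D is constant, equal to the inf of its range
  set c : ℝ := sInf (Set.range D) with hcdef
  have hne : (Set.range D).Nonempty := ⟨D x₀, x₀, rfl⟩
  have hbdd : BddBelow (Set.range D) := ⟨0, by rintro _ ⟨x, rfl⟩; exact hD0 x⟩
  have hcle : ∀ x, c ≤ D x := fun x => csInf_le hbdd ⟨x, rfl⟩
  have hDc : ∀ x, D x = c := by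
    intro x
    by_contra hcon
    have hlt : c < D x := (hcle x).lt_of_ne (Ne.symm hcon)
    obtain ⟨y', ⟨y, rfl⟩, hy⟩ : ∃ a ∈ Set.range D, a < D x :=
      exists_lt_of_csInf_lt hne (by rw [← hcdef]; exact hlt)
    have hev : ∀ᶠ z in nhds x, D y < D z := hDlsc x _ hy
    obtain ⟨U, hU, hUopen, hxU⟩ := eventually_nhds_iff.1 hev
    obtain ⟨_, ⟨n, rfl⟩, hnU⟩ := (hmin y).exists_mem_open hUopen ⟨x, hxU⟩
    have h1 : D y < D (T^[n] y) := hU _ hnU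
    have h2 := hDiter n y
    linarith
  -- hence ψ = χ + c, so ψ is continuous
  have hψχ : ∀ x, ψ x = χ x + c := by
    intro x
    have := hDc x
    simp only [hDdef] at this
    linarith
  have hψcont : Continuous ψ := by
    rw [continuous_iff_continuousAt]
    intro x
    apply tendsto_order.2
    constructor
    · intro y hy
      exact hψlsc x y hy
    · intro y hy
      have h : χ x < y - c := by have := hψχ x; linarith
      filter_upwards [hχusc x (y - c) h] with z hz
      have := hψχ z
      linarith
  -- the solution
  refine ⟨fun x => ψ x - c / 2, hψcont.sub continuous_const, ?_⟩
  intro x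
  have h1 := hineq1 x
  have h2 := hineq2 x
  have h3 := hψχ x
  have h4 := hψχ (T x)
  linarith
end

section
/- Let X be a compact metric space and T : X → X a continuous minimal map (every forward orbit {Tⁿ(x) : n ∈ ℕ} is dense in X). Let β ∈ ℝ and let ρ : X → ℂ be continuous. If there exist a point x₀ ∈ X and a constant C ≥ 0 such that the twisted Birkhoff sums satisfy |Σ_{k=0}^{n−1} e^{−ikβ} ρ(T^k(x₀))| ≤ C for all n ∈ ℕ, then the twisted cohomological equation φ(T(x)) − e^{iβ} φ(x) = ρ(x) has a continuous solution φ : X → ℂ. -/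
/-!
With `u = e^{-iβ}`, the skew product `F (x, w, z) = (T x, w + u z ρ(x), u z)` on `X × ℂ × Circle`
has the twisted Birkhoff sums (times `u`) as `w`-coordinates along the orbit of `(x₀, 0, 1)`, so
that orbit has compact closure, which contains a minimal set `M` of `F`. Rigid motions `g` of the
plane act fibrewise by `(w, z) ↦ (g • w, (rot g) z)`, commuting with `F`; a motion carrying one
point of `M` into `M` preserves `M`. Hence the stabiliser of `M` is a compact group acting
transitively on each fibre of `M` over `X` (and `M` meets every fibre, as `T` is minimal). A compact
group of rigid motions fixes some `w₀`, so `z⁻¹ (w - w₀)` is constant on the fibres of `M` and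
descends to a continuous `φ` on `X`; it solves the equation because `F` multiplies it by `e^{iβ}`
and adds `ρ`.
-/

open Set MeasureTheory
open scoped Pointwise

section MinimalSet

variable {α : Type*} [TopologicalSpace α] {f : α → α} {M : Set α}

def IsMinimalSet (f : α → α) (M : Set α) : Prop :=
  Minimal (fun s : Set α => s.Nonempty ∧ IsClosed s ∧ MapsTo f s s) M

lemma IsMinimalSet.nonempty (hM : IsMinimalSet f M) : M.Nonempty :=
  hM.1.1

lemma IsMinimalSet.isClosed (hM : IsMinimalSet f M) : IsClosed M :=
  hM.1.2.1

lemma IsMinimalSet.mapsTo (hM : IsMinimalSet f M) : MapsTo f M M :=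
  hM.1.2.2

theorem IsCompact.exists_isMinimalSet_subset {K : Set α} (hK : IsCompact K)
    (hKc : IsClosed K) (hne : K.Nonempty) (hf : MapsTo f K K) :
    ∃ M ⊆ K, IsMinimalSet f M := by
  let S : Set (Set α) := {s | s.Nonempty ∧ IsClosed s ∧ MapsTo f s s ∧ s ⊆ K}
  have hchain : ∀ c ⊆ S, IsChain (· ⊆ ·) c → c.Nonempty → ∃ lb ∈ S, ∀ s ∈ c, lb ⊆ s := by
    intro c hcS hc hcne
    have : Nonempty c := hcne.to_subtype
    refine ⟨⋂₀ c, ⟨?_, isClosed_sInter fun s hs => (hcS hs).2.1, ?_, ?_⟩,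
      fun s hs => sInter_subset_of_mem hs⟩
    · exact IsCompact.nonempty_sInter_of_directed_nonempty_isCompact_isClosed
        (fun a ha b hb => (hc.total ha hb).elim (fun h => ⟨a, ha, subset_rfl, h⟩)
          (fun h => ⟨b, hb, h, subset_rfl⟩))
        (fun s hs => (hcS hs).1)
        (fun s hs => hK.of_isClosed_subset (hcS hs).2.1 (hcS hs).2.2.2)
        (fun s hs => (hcS hs).2.1)
    · exact fun p hp => mem_sInter.2 fun s hs => (hcS hs).2.2.1 (mem_sInter.1 hp s hs)
    · obtain ⟨s, hs⟩ := hcne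
      exact (sInter_subset_of_mem hs).trans (hcS hs).2.2.2
  obtain ⟨M, hMK, hM⟩ := zorn_superset_nonempty S hchain K ⟨hne, hKc, hf, subset_rfl⟩
  exact ⟨M, hMK, ⟨hM.1.1, hM.1.2.1, hM.1.2.2.1⟩,
    fun N hN hNM => hM.2 ⟨hN.1, hN.2.1, hN.2.2, hNM.trans hMK⟩ hNM⟩

theorem IsMinimalSet.smul_eq {G : Type*} [Group G] [MulAction G α] [ContinuousConstSMul G α]
    (hf : ∀ (g : G) p, f (g • p) = g • f p) (hM : IsMinimalSet f M)
    {g : G} {p : α} (hp : p ∈ M) (hgp : g • p ∈ M) : g • M = M := by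
  have hsub : ∀ (h : G) (q : α), q ∈ M → h • q ∈ M → M ⊆ h • M := by
    intro h q hq hhq
    have hmaps : MapsTo f (h • M) (h • M) := by
      rintro _ ⟨m, hm, rfl⟩
      exact ⟨f m, hM.mapsTo hm, (hf h m).symm⟩
    -- `M ∩ h • M` is a nonempty closed invariant subset of `M`.
    refine inter_eq_left.1 (hM.eq_of_subset ⟨⟨h • q, hhq, smul_mem_smul_set hq⟩,
      hM.isClosed.inter (hM.isClosed.smul h), hM.mapsTo.inter_inter hmaps⟩ inter_subset_left)
  refine Subset.antisymm ?_ (hsub g p hp hgp)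
  simpa [subset_smul_set_iff] using hsub g⁻¹ (g • p) hgp (by simpa using hp)

end MinimalSet

theorem isClosed_stabilizer_of_isClosed {G α : Type*} [Group G] [TopologicalSpace G]
    [ContinuousInv G] [TopologicalSpace α] [MulAction G α] [ContinuousSMul G α] {M : Set α}
    (hM : IsClosed M) : IsClosed (MulAction.stabilizer G M : Set G) := by
  have hmaps : IsClosed {g : G | g • M ⊆ M} := by
    simp only [smul_set_subset_iff, ofPred_forall]
    exact isClosed_biInter fun p _ => hM.preimage (continuous_id.smul continuous_const)
  have hstab : (MulAction.stabilizer G M : Set G) =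
      {g | g • M ⊆ M} ∩ (·⁻¹) ⁻¹' {g | g • M ⊆ M} := by
    ext g
    simp [MulAction.mem_stabilizer_iff, subset_antisymm_iff, subset_smul_set_iff]
  rw [hstab]
  exact hmaps.inter (hmaps.preimage continuous_inv)

theorem image_eq_univ_of_semiconj {α X : Type*} [TopologicalSpace α] [TopologicalSpace X]
    [T2Space X] {F : α → α} {T : X → X} {π : α → X} (hπ : Continuous π)
    (hsc : Function.Semiconj π F T) (hT : ∀ x, Dense (range fun n : ℕ => T^[n] x))
    {M : Set α} (hM : IsCompact M) (hne : M.Nonempty) (hF : MapsTo F M M) : π '' M = univ := by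
  obtain ⟨p, hp⟩ := hne
  refine eq_univ_of_univ_subset ((hT (π p)).closure_eq ▸
    closure_minimal ?_ (hM.image hπ).isClosed)
  rintro _ ⟨n, rfl⟩
  exact ⟨F^[n] p, hF.iterate n hp, (hsc.iterate_right n) p⟩

theorem IsCompact.exists_continuous_eqOn_comp {α X Z : Type*} [TopologicalSpace α]
    [TopologicalSpace X] [T2Space X] [TopologicalSpace Z] {π : α → X} {M : Set α}
    (hM : IsCompact M) (hπ : Continuous π) (hsurj : π '' M = univ) {Φ : α → Z}
    (hΦ : Continuous Φ) (hfib : ∀ p ∈ M, ∀ q ∈ M, π p = π q → Φ p = Φ q) :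
    ∃ φ : X → Z, Continuous φ ∧ ∀ p ∈ M, φ (π p) = Φ p := by
  have hs : ∀ x, ∃ p ∈ M, π p = x := fun x => (hsurj.symm ▸ mem_univ x : x ∈ π '' M)
  choose s hsM hπs using hs
  have heq : ∀ p ∈ M, Φ (s (π p)) = Φ p := fun p hp => hfib _ (hsM _) p hp (hπs _)
  refine ⟨Φ ∘ s, continuous_iff_isClosed.2 fun t ht => ?_, heq⟩
  have : Φ ∘ s ⁻¹' t = π '' (M ∩ Φ ⁻¹' t) := by
    ext x
    refine ⟨fun hx => ⟨s x, ⟨hsM x, hx⟩, hπs x⟩, ?_⟩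
    rintro ⟨p, ⟨hpM, hpt⟩, rfl⟩
    simpa [heq p hpM] using hpt
  rw [this]
  exact ((hM.inter_right (ht.preimage hΦ)).image hπ).isClosed

theorem mapsTo_closure_range_iterate {α : Type*} [TopologicalSpace α] {f : α → α}
    (hf : Continuous f) (x : α) :
    MapsTo f (closure (range fun n : ℕ => f^[n] x)) (closure (range fun n : ℕ => f^[n] x)) :=
  MapsTo.closure (by rintro _ ⟨n, rfl⟩; exact ⟨n + 1, Function.iterate_succ_apply' f n x⟩) hf

/-- `⟨a, c⟩` is the rigid motion `w ↦ a * w + c` of the plane `ℂ`. -/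
@[ext]
structure RigidMotion where
  rot : Circle
  shift : ℂ

namespace RigidMotion

noncomputable section

instance : Mul RigidMotion := ⟨fun g h => ⟨g.rot * h.rot, g.rot * h.shift + g.shift⟩⟩

instance : One RigidMotion := ⟨⟨1, 0⟩⟩

instance : Inv RigidMotion := ⟨fun g => ⟨g.rot⁻¹, -(g.rot⁻¹ * g.shift)⟩⟩

@[simp] lemma rot_mul (g h : RigidMotion) : (g * h).rot = g.rot * h.rot := rfl

@[simp] lemma shift_mul (g h : RigidMotion) : (g * h).shift = g.rot * h.shift + g.shift := rfl

@[simp] lemma rot_one : (1 : RigidMotion).rot = 1 := rfl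

@[simp] lemma shift_one : (1 : RigidMotion).shift = 0 := rfl

@[simp] lemma rot_inv (g : RigidMotion) : g⁻¹.rot = g.rot⁻¹ := rfl

@[simp] lemma shift_inv (g : RigidMotion) : g⁻¹.shift = -(g.rot⁻¹ * g.shift) := rfl

instance : Group RigidMotion where
  mul_assoc g h k := by ext <;> simp only [rot_mul, shift_mul, Circle.coe_mul, mul_assoc]; ring
  one_mul g := by ext <;> simp
  mul_one g := by ext <;> simp
  inv_mul_cancel g := by ext <;> simp

instance : SMul RigidMotion ℂ := ⟨fun g w => g.rot * w + g.shift⟩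

lemma smul_def (g : RigidMotion) (w : ℂ) : g • w = g.rot * w + g.shift := rfl

instance : MulAction RigidMotion ℂ where
  one_smul w := by simp [smul_def]
  mul_smul g h w := by simp only [smul_def, rot_mul, shift_mul, Circle.coe_mul]; ring

def toProd : RigidMotion ≃ Circle × ℂ where
  toFun g := (g.rot, g.shift)
  invFun p := ⟨p.1, p.2⟩

instance : TopologicalSpace RigidMotion := .induced toProd inferInstance

def homeomorphProd : RigidMotion ≃ₜ Circle × ℂ :=
  toProd.toHomeomorphOfIsInducing ⟨rfl⟩

@[fun_prop]
lemma continuous_rot : Continuous rot := continuous_fst.comp homeomorphProd.continuous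

@[fun_prop]
lemma continuous_shift : Continuous shift := continuous_snd.comp homeomorphProd.continuous

@[fun_prop]
lemma continuous_mk {Y : Type*} [TopologicalSpace Y] {a : Y → Circle} {c : Y → ℂ}
    (ha : Continuous a) (hc : Continuous c) : Continuous fun y => (⟨a y, c y⟩ : RigidMotion) :=
  homeomorphProd.symm.continuous.comp (ha.prodMk hc)

instance : IsTopologicalGroup RigidMotion where
  continuous_mul := by
    show Continuous fun p : RigidMotion × RigidMotion =>
      (⟨p.1.rot * p.2.rot, p.1.rot * p.2.shift + p.1.shift⟩ : RigidMotion)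
    fun_prop
  continuous_inv := by
    show Continuous fun g : RigidMotion => (⟨g.rot⁻¹, -(g.rot⁻¹ * g.shift)⟩ : RigidMotion)
    fun_prop

/-- The Haar barycentre of the orbit of `0` is a common fixed point. -/
theorem exists_fixed_point_of_isCompact (H : Subgroup RigidMotion)
    (hH : IsCompact (H : Set RigidMotion)) : ∃ w : ℂ, ∀ g ∈ H, g • w = w := by
  have : CompactSpace H := isCompact_iff_compactSpace.mp hH
  let _ : MeasurableSpace H := borel H
  have : BorelSpace H := ⟨rfl⟩
  let μ : Measure H := Measure.haarMeasure ⊤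
  have : IsProbabilityMeasure μ := ⟨by simpa using Measure.haarMeasure_self (G := H) (K₀ := ⊤)⟩
  have hint : Integrable (fun h : H => (h : RigidMotion).shift) μ :=
    (continuous_shift.comp continuous_subtype_val).integrable_of_hasCompactSupport
      (.of_compactSpace _)
  refine ⟨∫ h, (h : RigidMotion).shift ∂μ, fun g hg => ?_⟩
  calc g • ∫ h, (h : RigidMotion).shift ∂μ
      = ∫ h, ((⟨g, hg⟩ * h : H) : RigidMotion).shift ∂μ := by
        simp only [smul_def, Subgroup.coe_mul, shift_mul]
        rw [integral_add (hint.const_mul _) (integrable_const _), integral_const_mul,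
          integral_const, probReal_univ, one_smul]
    _ = ∫ h, (h : RigidMotion).shift ∂μ :=
        integral_mul_left_eq_self (fun h : H => (h : RigidMotion).shift) ⟨g, hg⟩

end

end RigidMotion

section TwistedSkewProduct

variable {X : Type*}

noncomputable instance : SMul RigidMotion (X × ℂ × Circle) :=
  ⟨fun g p => (p.1, g • p.2.1, g.rot * p.2.2)⟩

lemma RigidMotion.smul_prod_def (g : RigidMotion) (p : X × ℂ × Circle) :
    g • p = (p.1, g • p.2.1, g.rot * p.2.2) := rfl

noncomputable instance : MulAction RigidMotion (X × ℂ × Circle) where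
  one_smul p := by simp [RigidMotion.smul_prod_def]
  mul_smul g h p := by simp [RigidMotion.smul_prod_def, mul_smul, mul_assoc]

lemma RigidMotion.exists_smul_eq_of_fst_eq {p q : X × ℂ × Circle} (h : p.1 = q.1) :
    ∃ g : RigidMotion, g • p = q :=
  ⟨⟨q.2.2 * p.2.2⁻¹, q.2.1 - (q.2.2 * p.2.2⁻¹ : Circle) * p.2.1⟩, by
    ext <;> simp [RigidMotion.smul_prod_def, RigidMotion.smul_def, h]⟩

noncomputable def twistedSkewProduct (T : X → X) (ρ : X → ℂ) (u : Circle)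
    (p : X × ℂ × Circle) : X × ℂ × Circle :=
  (T p.1, p.2.1 + u * p.2.2 * ρ p.1, u * p.2.2)

noncomputable def twistedCoord (w₀ : ℂ) (p : X × ℂ × Circle) : ℂ :=
  (p.2.2⁻¹ : Circle) * (p.2.1 - w₀)

variable (T : X → X) (ρ : X → ℂ) (u : Circle)

lemma fst_twistedSkewProduct : Function.Semiconj Prod.fst (twistedSkewProduct T ρ u) T :=
  fun _ => rfl

lemma twistedSkewProduct_smul (g : RigidMotion) (p : X × ℂ × Circle) :
    twistedSkewProduct T ρ u (g • p) = g • twistedSkewProduct T ρ u p := by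
  ext <;> simp only [twistedSkewProduct, RigidMotion.smul_prod_def, RigidMotion.smul_def,
    Circle.coe_mul] <;> ring

lemma twistedSkewProduct_iterate (x : X) (n : ℕ) :
    (twistedSkewProduct T ρ u)^[n] (x, 0, 1) =
      (T^[n] x, ∑ k ∈ Finset.range n, (u : ℂ) ^ (k + 1) * ρ (T^[k] x), u ^ n) := by
  induction n with
  | zero => simp
  | succ n ih =>
    rw [Function.iterate_succ_apply', ih, Function.iterate_succ_apply']
    ext
    · rfl
    · simp only [twistedSkewProduct, Finset.sum_range_succ, Circle.coe_pow]
      ring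
    · simp [twistedSkewProduct, pow_succ']

lemma twistedCoord_smul {w₀ : ℂ} {g : RigidMotion} (hg : g • w₀ = w₀) (p : X × ℂ × Circle) :
    twistedCoord w₀ (g • p) = twistedCoord w₀ p := by
  rw [RigidMotion.smul_def] at hg
  simp only [twistedCoord, RigidMotion.smul_prod_def, RigidMotion.smul_def, mul_inv,
    Circle.coe_mul, Circle.coe_inv]
  field_simp
  linear_combination hg

lemma twistedCoord_twistedSkewProduct (w₀ : ℂ) (p : X × ℂ × Circle) :
    twistedCoord w₀ (twistedSkewProduct T ρ u p) =
      (u⁻¹ : Circle) * twistedCoord w₀ p + ρ p.1 := by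
  simp only [twistedCoord, twistedSkewProduct, mul_inv, Circle.coe_mul, Circle.coe_inv]
  field_simp
  ring

variable [TopologicalSpace X]

lemma continuous_twistedSkewProduct (hT : Continuous T) (hρ : Continuous ρ) :
    Continuous (twistedSkewProduct T ρ u) := by
  unfold twistedSkewProduct; fun_prop

lemma continuous_twistedCoord (w₀ : ℂ) : Continuous (twistedCoord (X := X) w₀) := by
  unfold twistedCoord; fun_prop

instance : ContinuousSMul RigidMotion (X × ℂ × Circle) where
  continuous_smul := by
    show Continuous fun q : RigidMotion × X × ℂ × Circle =>
      (q.2.1, q.1.rot * q.2.2.1 + q.1.shift, q.1.rot * q.2.2.2)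
    fun_prop

variable {T ρ u}

lemma isCompact_stabilizer_of_norm_le {M : Set (X × ℂ × Circle)} (hMc : IsClosed M)
    (hne : M.Nonempty) {C : ℝ} (hC : ∀ p ∈ M, ‖p.2.1‖ ≤ C) :
    IsCompact (MulAction.stabilizer RigidMotion M : Set RigidMotion) := by
  obtain ⟨p, hp⟩ := hne
  refine (RigidMotion.homeomorphProd.isCompact_preimage.2
    (isCompact_univ.prod (isCompact_closedBall (0 : ℂ) (C + C)))).of_isClosed_subset
    (isClosed_stabilizer_of_isClosed hMc) fun g (hg : g • M = M) => ⟨trivial, ?_⟩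
  have hgp : ‖(g.rot : ℂ) * p.2.1 + g.shift‖ ≤ C := hC _ (hg ▸ smul_mem_smul_set hp)
  have hrot : ‖(g.rot : ℂ) * p.2.1‖ ≤ C := by simpa [Circle.norm_coe] using hC p hp
  rw [mem_closedBall_zero_iff]
  calc ‖g.shift‖ = ‖((g.rot : ℂ) * p.2.1 + g.shift) - g.rot * p.2.1‖ := by ring_nf
    _ ≤ C + C := (norm_sub_le _ _).trans (add_le_add hgp hrot)

theorem exists_isMinimalSet_twistedSkewProduct [CompactSpace X] (hT : Continuous T)
    (hρ : Continuous ρ) (x₀ : X) {C : ℝ}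
    (hbound : ∀ n : ℕ, ‖∑ k ∈ Finset.range n, (u : ℂ) ^ k * ρ (T^[k] x₀)‖ ≤ C) :
    ∃ M, IsMinimalSet (twistedSkewProduct T ρ u) M ∧ IsCompact M ∧ ∀ p ∈ M, ‖p.2.1‖ ≤ C := by
  set K := closure (range fun n : ℕ => (twistedSkewProduct T ρ u)^[n] (x₀, 0, 1))
  have hKC : K ⊆ {p | ‖p.2.1‖ ≤ C} := by
    refine closure_minimal (range_subset_iff.2 fun n => ?_)
      (isClosed_le (by fun_prop) (by fun_prop))
    simpa [twistedSkewProduct_iterate, pow_succ', mul_assoc, ← Finset.mul_sum, Circle.norm_coe]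
      using hbound n
  have hK : IsCompact K :=
    (isCompact_univ.prod ((isCompact_closedBall (0 : ℂ) C).prod isCompact_univ)
      ).of_isClosed_subset isClosed_closure fun p hp => ⟨trivial, by simpa using hKC hp, trivial⟩
  obtain ⟨M, hMK, hM⟩ := hK.exists_isMinimalSet_subset isClosed_closure
    ⟨_, subset_closure (mem_range_self 0)⟩
    (mapsTo_closure_range_iterate (continuous_twistedSkewProduct T ρ u hT hρ) _)
  exact ⟨M, hM, hK.of_isClosed_subset hM.isClosed hMK, fun p hp => hKC (hMK hp)⟩

theorem IsMinimalSet.twistedCoord_eq_of_fst_eq {M : Set (X × ℂ × Circle)}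
    (hM : IsMinimalSet (twistedSkewProduct T ρ u) M) {w₀ : ℂ}
    (hw₀ : ∀ g ∈ MulAction.stabilizer RigidMotion M, g • w₀ = w₀) {p q : X × ℂ × Circle}
    (hp : p ∈ M) (hq : q ∈ M) (h : p.1 = q.1) : twistedCoord w₀ p = twistedCoord w₀ q := by
  obtain ⟨g, rfl⟩ := RigidMotion.exists_smul_eq_of_fst_eq h
  exact (twistedCoord_smul (hw₀ g (hM.smul_eq (twistedSkewProduct_smul T ρ u) hp hq)) p).symm

end TwistedSkewProduct

theorem twisted_cohomological_equation_continuous_solution_general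
    {X : Type*} [MetricSpace X] [CompactSpace X]
    (T : X → X) (hT_cont : Continuous T)
    (hmin : ∀ x, Dense (Set.range fun n : ℕ => T^[n] x))
    (β : ℝ) (ρ : X → ℂ) (hρ : Continuous ρ)
    (x₀ : X) (C : ℝ)
    (hbound : ∀ n : ℕ,
      ‖∑ k ∈ Finset.range n,
        Complex.exp (-((k : ℂ) * (β : ℂ)) * Complex.I) * ρ (T^[k] x₀)‖ ≤ C) :
    ∃ φ : X → ℂ, Continuous φ ∧
      ∀ x, φ (T x) - Complex.exp ((β : ℂ) * Complex.I) * φ x = ρ x := by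
  set u := Circle.exp (-β)
  have hu (k : ℕ) : Complex.exp (-((k : ℂ) * β) * Complex.I) = (u : ℂ) ^ k := by
    rw [← Circle.coe_pow, ← Circle.exp_natCast_mul, Circle.coe_exp]
    push_cast
    ring_nf
  obtain ⟨M, hM, hMcompact, hMbound⟩ :=
    exists_isMinimalSet_twistedSkewProduct hT_cont hρ x₀ (by simpa only [hu] using hbound)
  obtain ⟨w₀, hw₀⟩ := RigidMotion.exists_fixed_point_of_isCompact _
    (isCompact_stabilizer_of_norm_le hM.isClosed hM.nonempty hMbound)
  have hsurj : Prod.fst '' M = univ := image_eq_univ_of_semiconj continuous_fst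
    (fst_twistedSkewProduct T ρ u) hmin hMcompact hM.nonempty hM.mapsTo
  obtain ⟨φ, hφ, hφM⟩ := hMcompact.exists_continuous_eqOn_comp continuous_fst hsurj
    (continuous_twistedCoord w₀) fun p hp q hq => hM.twistedCoord_eq_of_fst_eq hw₀ hp hq
  refine ⟨φ, hφ, fun x => ?_⟩
  obtain ⟨p, hp, rfl⟩ : x ∈ Prod.fst '' M := hsurj ▸ mem_univ x
  rw [← fst_twistedSkewProduct T ρ u p, hφM _ (hM.mapsTo hp), hφM p hp,
    twistedCoord_twistedSkewProduct]
  simp [u, Circle.coe_exp]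

/-- Bounded twisted Birkhoff sums at one point imply that the twisted cohomological equation
`φ ∘ T - e^{iβ} φ = ρ` has a continuous solution, for a minimal continuous map `T`. -/
theorem twisted_cohomological_equation_continuous_solution
    {X : Type*} [MetricSpace X] [CompactSpace X]
    (T : X → X) (hT_cont : Continuous T)
    (hmin : ∀ x, Dense (Set.range fun n : ℕ => T^[n] x))
    (β : ℝ) (ρ : X → ℂ) (hρ : Continuous ρ)
    (x₀ : X) (C : ℝ) (hC : 0 ≤ C)
    (hbound : ∀ n : ℕ,
      ‖∑ k ∈ Finset.range n,
        Complex.exp (-((k : ℂ) * (β : ℂ)) * Complex.I) * ρ (T^[k] x₀)‖ ≤ C) :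
    ∃ φ : X → ℂ, Continuous φ ∧
      ∀ x, φ (T x) - Complex.exp ((β : ℂ) * Complex.I) * φ x = ρ x :=
  twisted_cohomological_equation_continuous_solution_general T hT_cont hmin β ρ hρ x₀ C hbound
end

section
/- Let q ≥ 1 be an integer and let α, β be real numbers such that α/(2π) is irrational and β ∉ {mα + 2πk : m, k ∈ ℤ}. Let φ, ρ : ℝ/2πℤ → ℂ be continuous functions. Then φ solves the cyclotonic equation Σ_{k=0}^{q−1} e^{ikβ/q} φ(θ + (q−k−1)α/q) = ρ(θ) for all θ ∈ ℝ/2πℤ if and only if φ solves the twisted cohomological equation φ(θ + α) − e^{iβ} φ(θ) = ρ(θ + α/q) − e^{iβ/q} ρ(θ) for all θ ∈ ℝ/2πℤ. -/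
/-!
Let `τ` be translation by `α / q` on the circle and `c = e^{iβ/q}`. The cyclotonic operator
`S = ∑ₖ cᵏ τ^{q-1-k}` satisfies `(τ - c) S = τ^q - c^q = τ_α - e^{iβ}`, so applying `τ - c` to the
cyclotonic equation gives the twisted one. Conversely, if `φ` solves the twisted equation then
`D = S φ - ρ` satisfies `D (θ + α / q) = c D θ`. Translation multiplies the `n`-th Fourier
coefficient by `e^{inα/q}`, which differs from `c` by the hypothesis on `β`; hence all Fourier
coefficients of the continuous function `D` vanish, and `D = 0`.
-/

open MeasureTheory Complex Finset AddCircle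

section Cyclotonic

variable {G R : Type*} [AddMonoid G] [Ring R]

def cyclotonicSum (c : R) (a : G) (q : ℕ) (φ : G → R) (θ : G) : R :=
  ∑ k ∈ range q, c ^ k * φ (θ + (q - 1 - k) • a)

theorem cyclotonicSum_succ (c : R) (a : G) (q : ℕ) (φ : G → R) (θ : G) :
    cyclotonicSum c a (q + 1) φ θ = cyclotonicSum c a q φ (θ + a) + c ^ q * φ θ := by
  rw [cyclotonicSum, sum_range_succ, Nat.add_sub_cancel, Nat.sub_self, zero_smul, add_zero]
  congr 1
  refine sum_congr rfl fun k hk => ?_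
  have hkq := mem_range.1 hk
  rw [add_assoc, ← succ_nsmul', show q - 1 - k + 1 = q - k by omega]

theorem cyclotonicSum_add_sub_mul (c : R) (a : G) (q : ℕ) (φ : G → R) (θ : G) :
    cyclotonicSum c a q φ (θ + a) - c * cyclotonicSum c a q φ θ
      = φ (θ + q • a) - c ^ q * φ θ := by
  induction q generalizing θ with
  | zero => simp [cyclotonicSum]
  | succ q ih =>
    have h := sub_eq_zero.2 (ih (θ + a))
    rw [add_assoc θ a (q • a), ← succ_nsmul'] at h
    rw [cyclotonicSum_succ, cyclotonicSum_succ, pow_succ', mul_add, mul_assoc, ← sub_eq_zero,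
      ← h]
    abel

theorem Continuous.cyclotonicSum [TopologicalSpace G] [ContinuousAdd G] [TopologicalSpace R]
    [ContinuousAdd R] [ContinuousMul R] {φ : G → R} (hφ : Continuous φ) (c : R) (a : G) (q : ℕ) :
    Continuous (cyclotonicSum c a q φ) :=
  continuous_finsetSum _ fun _ _ => continuous_const.mul (hφ.comp (continuous_add_const _))

end Cyclotonic

section Fourier

variable {T : ℝ}

theorem fourier_apply_add (n : ℤ) (x y : AddCircle T) :
    fourier n (x + y) = fourier n x * fourier n y := by
  simp only [fourier_apply, smul_add, toCircle_add, Circle.coe_mul]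

theorem fourier_mul_fourier_neg (n : ℤ) (x : AddCircle T) : fourier n x * fourier (-n) x = 1 := by
  rw [← fourier_add, add_neg_cancel, fourier_zero]

variable [Fact (0 < T)]

theorem fourierCoeff_comp_add {E : Type*} [NormedAddCommGroup E] [NormedSpace ℂ E]
    (f : AddCircle T → E) (a : AddCircle T) (n : ℤ) :
    fourierCoeff (fun x => f (x + a)) n = fourier n a • fourierCoeff f n := by
  have hshift (x : AddCircle T) : fourier n a * fourier (-n) (x + a) = fourier (-n) x := by
    rw [fourier_apply_add, mul_left_comm, fourier_mul_fourier_neg, mul_one]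
  calc fourierCoeff (fun x => f (x + a)) n
      = ∫ x, fourier n a • (fourier (-n) (x + a) • f (x + a)) ∂haarAddCircle := by
        simp only [fourierCoeff, smul_smul, hshift]
    _ = fourier n a • fourierCoeff f n := by
        rw [integral_smul, integral_add_right_eq_self (fun x => fourier (-n) x • f x) a]
        rfl

theorem ContinuousMap.eq_zero_of_fourierCoeff_eq_zero (f : C(AddCircle T, ℂ))
    (hf : ∀ n, fourierCoeff f n = 0) : f = 0 := by
  apply ContinuousMap.toLp_injective (p := 2) (𝕜 := ℂ) haarAddCircle
  rw [map_zero]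
  apply fourierBasis.repr.injective
  ext n
  rw [fourierBasis_repr, fourierCoeff_toLp, hf, map_zero]
  rfl

theorem ContinuousMap.eq_zero_of_comp_add_eq_mul (f : C(AddCircle T, ℂ)) {a : AddCircle T}
    {c : ℂ} (hc : ∀ n, fourier n a ≠ c) (hf : ∀ x, f (x + a) = c * f x) : f = 0 := by
  refine f.eq_zero_of_fourierCoeff_eq_zero fun n => ?_
  have h := fourierCoeff_comp_add f a n
  simp_rw [hf, fourierCoeff.const_mul, smul_eq_mul] at h
  exact (mul_eq_mul_right_iff.1 h).resolve_left (hc n).symm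

end Fourier

theorem fourier_coe_div_ne_exp_div {α β : ℝ} (hβ : ∀ m k : ℤ, β ≠ m * α + 2 * Real.pi * k)
    {q : ℕ} (hq : q ≠ 0) (n : ℤ) :
    fourier n ((α / q : ℝ) : AddCircle (2 * Real.pi)) ≠ exp (β / q * I) := by
  rw [fourier_coe_apply, Ne, exp_eq_exp_iff_exists_int]
  rintro ⟨m, hm⟩
  push_cast at hm
  field_simp at hm
  have hm' : n * α = β + 2 * Real.pi * q * m := by exact_mod_cast hm
  exact hβ n (-(m * q)) (by push_cast; linarith)

theorem sum_exp_mul_comp_eq_cyclotonicSum {T : ℝ} (q : ℕ) (α β : ℝ) (φ : AddCircle T → ℂ)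
    (θ : AddCircle T) :
    ∑ k ∈ range q, exp (k * β / q * I) * φ (θ + (((q - k - 1) * α / q : ℝ) : AddCircle T))
      = cyclotonicSum (exp (β / q * I)) ((α / q : ℝ) : AddCircle T) q φ θ := by
  refine sum_congr rfl fun k hk => ?_
  have hkq := mem_range.1 hk
  rw [← exp_nat_mul, ← AddCircle.coe_nsmul, nsmul_eq_mul, Nat.cast_sub (by omega),
    Nat.cast_sub (by omega)]
  congr 1 <;> ring_nf

theorem cyclotonic_iff_twisted_general
    (q : ℕ) (hq : 1 ≤ q) (α β : ℝ)
    (hβ : ∀ m k : ℤ, β ≠ m * α + 2 * Real.pi * k)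
    (φ ρ : AddCircle (2 * Real.pi) → ℂ)
    (hφ : Continuous φ) (hρ : Continuous ρ) :
    (∀ θ : AddCircle (2 * Real.pi),
        ∑ k ∈ Finset.range q,
          Complex.exp ((k : ℂ) * (β : ℂ) / (q : ℂ) * Complex.I) *
            φ (θ + ((((q : ℝ) - k - 1) * α / q : ℝ) : AddCircle (2 * Real.pi)))
        = ρ θ)
      ↔
    (∀ θ : AddCircle (2 * Real.pi),
        φ (θ + ((α : ℝ) : AddCircle (2 * Real.pi)))
            - Complex.exp ((β : ℂ) * Complex.I) * φ θ
        = ρ (θ + ((α / q : ℝ) : AddCircle (2 * Real.pi)))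
            - Complex.exp ((β : ℂ) / (q : ℂ) * Complex.I) * ρ θ) := by
  have : Fact (0 < 2 * Real.pi) := ⟨by positivity⟩
  have hq0 : q ≠ 0 := by omega
  set a : AddCircle (2 * Real.pi) := ((α / q : ℝ) : AddCircle (2 * Real.pi))
  set c : ℂ := exp (β / q * I)
  have hqa : q • a = α := by
    rw [← AddCircle.coe_nsmul, nsmul_eq_mul, mul_div_cancel₀ _ (Nat.cast_ne_zero.2 hq0)]
  have hcq : c ^ q = exp (β * I) := by
    rw [← exp_nat_mul]
    field_simp
  let D : C(AddCircle (2 * Real.pi), ℂ) :=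
    ⟨fun θ => cyclotonicSum c a q φ θ - ρ θ, (hφ.cyclotonicSum c a q).sub hρ⟩
  have hD (θ) : D (θ + a) - c * D θ
      = (φ (θ + α) - exp (β * I) * φ θ) - (ρ (θ + a) - c * ρ θ) := by
    simp only [D, ContinuousMap.coe_mk, ← hqa, ← hcq, ← cyclotonicSum_add_sub_mul]
    ring
  simp_rw [sum_exp_mul_comp_eq_cyclotonicSum]
  calc (∀ θ, cyclotonicSum c a q φ θ = ρ θ) ↔ D = 0 := by
        simp [D, ContinuousMap.ext_iff, sub_eq_zero]
    _ ↔ ∀ θ, D (θ + a) = c * D θ :=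
        ⟨fun h θ => by simp [h], D.eq_zero_of_comp_add_eq_mul (fourier_coe_div_ne_exp_div hβ hq0)⟩
    _ ↔ _ := by simp_rw [← sub_eq_zero (a := D _), hD, sub_eq_zero]

/-- Equivalence between the cyclotonic equation and the associated twisted cohomological
equation on the circle `ℝ/2πℤ`, when `α/(2π)` is irrational and `β` is rationally
independent from `α` modulo `2π`. -/
theorem cyclotonic_iff_twisted
    (q : ℕ) (hq : 1 ≤ q) (α β : ℝ)
    (hα : Irrational (α / (2 * Real.pi)))
    (hβ : ∀ m k : ℤ, β ≠ m * α + 2 * Real.pi * k)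
    (φ ρ : AddCircle (2 * Real.pi) → ℂ)
    (hφ : Continuous φ) (hρ : Continuous ρ) :
    (∀ θ : AddCircle (2 * Real.pi),
        ∑ k ∈ Finset.range q,
          Complex.exp ((k : ℂ) * (β : ℂ) / (q : ℂ) * Complex.I) *
            φ (θ + ((((q : ℝ) - k - 1) * α / q : ℝ) : AddCircle (2 * Real.pi)))
        = ρ θ)
      ↔
    (∀ θ : AddCircle (2 * Real.pi),
        φ (θ + ((α : ℝ) : AddCircle (2 * Real.pi)))
            - Complex.exp ((β : ℂ) * Complex.I) * φ θ
        = ρ (θ + ((α / q : ℝ) : AddCircle (2 * Real.pi)))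
            - Complex.exp ((β : ℂ) / (q : ℂ) * Complex.I) * ρ θ) :=
  cyclotonic_iff_twisted_general q hq α β hβ φ ρ hφ hρ
end

section
/- Let H be a real Hilbert space (complete inner product space over ℝ) and let B ⊆ H be a nonempty bounded subset. Then there exists a unique point c ∈ H realizing the radius of B: setting r_B(v) := sup_{w ∈ B} dist(v,w) and r_B := inf_{v ∈ H} r_B(v), there is exactly one c ∈ H with r_B(c) = r_B. This point is the Chebyshev (geometric) center of B, characterized as the unique point c with B ⊆ closedBall(c, r_B). -/
/-!
The function `r_B` is `1`-Lipschitz, and in a Hilbert space the parallelogram law (Apollonius)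
gives, for the midpoint `m` of `u` and `v`,
`4 r_B(m)² + ‖u - v‖² ≤ 2 r_B(u)² + 2 r_B(v)²`. Since `r_B(m) ≥ r_B`, points whose radius is
close to `r_B` are close to each other: a minimizing sequence is Cauchy, its limit attains `r_B`,
and two points attaining `r_B` coincide. Finally, `r_B(c) ≤ r_B` says exactly that `B` lies in the
closed ball of radius `r_B` about `c`.
-/

open Metric Filter Topology Set

theorem existsUnique_eq_ciInf_of_dist_sq_le {α : Type*} [MetricSpace α] [CompleteSpace α]
    [Nonempty α] {f : α → ℝ} (hf : Continuous f) (hbdd : BddBelow (range f))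
    (h : ∀ u v, dist u v ^ 2 + 4 * (⨅ x, f x) ^ 2 ≤ 2 * f u ^ 2 + 2 * f v ^ 2) :
    ∃! c, f c = ⨅ x, f x := by
  set m := ⨅ x, f x
  obtain ⟨y, -, hy, hy_mem⟩ := exists_seq_tendsto_sInf (range_nonempty f) hbdd
  choose v hv using hy_mem
  have hfv : Tendsto (fun n => f (v n)) atTop (𝓝 m) := funext hv ▸ hy
  have hcauchy : CauchySeq v := by
    refine Metric.cauchySeq_iff'.2 fun ε hε => ?_
    have hε4 : m ^ 2 < m ^ 2 + ε ^ 2 / 4 := lt_add_of_pos_right _ (by positivity)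
    obtain ⟨N, hN⟩ := eventually_atTop.1 <| (hfv.pow 2).eventually (gt_mem_nhds hε4)
    refine ⟨N, fun n hn => lt_of_pow_lt_pow_left₀ 2 hε.le ?_⟩
    linarith [h (v n) (v N), hN n hn, hN N le_rfl]
  obtain ⟨c, hc⟩ := cauchySeq_tendsto_of_complete hcauchy
  have hfc : f c = m := tendsto_nhds_unique ((hf.tendsto c).comp hc) hfv
  refine ⟨c, hfc, fun c' (hc' : f c' = m) => dist_le_zero.1 ?_⟩
  have hcc' := h c' c
  rw [hc', hfc] at hcc'
  nlinarith [dist_nonneg (x := c') (y := c)]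

namespace Chebyshev

section PseudoMetric

variable {α : Type*} [PseudoMetricSpace α] {B : Set α}

noncomputable def radiusAt (B : Set α) (v : α) : ℝ := ⨆ w ∈ B, dist v w

noncomputable def radius (B : Set α) : ℝ := ⨅ v, radiusAt B v

theorem dist_le_radiusAt (hB : Bornology.IsBounded B) {v w : α} (hw : w ∈ B) :
    dist v w ≤ radiusAt B v := by
  obtain ⟨C, hC⟩ := hB.subset_closedBall v
  have hbdd : BddAbove (range fun w => ⨆ _ : w ∈ B, dist v w) := by
    refine ⟨max C 0, forall_mem_range.2 fun w' =>
      Real.iSup_le (fun hw' => ?_) (le_max_right _ _)⟩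
    exact le_max_of_le_left (dist_comm v w' ▸ hC hw')
  exact (ciSup_pos hw).ge.trans (le_ciSup hbdd w)

theorem radiusAt_le (hne : B.Nonempty) {v : α} {a : ℝ} (h : ∀ w ∈ B, dist v w ≤ a) :
    radiusAt B v ≤ a :=
  have ha : 0 ≤ a := dist_nonneg.trans (h _ hne.some_mem)
  Real.iSup_le (fun w => Real.iSup_le (h w) ha) ha

theorem radiusAt_le_iff_subset_closedBall (hne : B.Nonempty) (hB : Bornology.IsBounded B)
    {v : α} {a : ℝ} : radiusAt B v ≤ a ↔ B ⊆ closedBall v a := by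
  simp only [subset_def, mem_closedBall, dist_comm _ v]
  exact ⟨fun h w hw => (dist_le_radiusAt hB hw).trans h, radiusAt_le hne⟩

theorem radiusAt_nonneg (hne : B.Nonempty) (hB : Bornology.IsBounded B) (v : α) :
    0 ≤ radiusAt B v :=
  dist_nonneg.trans (dist_le_radiusAt hB hne.some_mem)

theorem bddBelow_range_radiusAt (hne : B.Nonempty) (hB : Bornology.IsBounded B) :
    BddBelow (range (radiusAt B)) :=
  ⟨0, forall_mem_range.2 (radiusAt_nonneg hne hB)⟩

theorem radius_le_radiusAt (hne : B.Nonempty) (hB : Bornology.IsBounded B) (v : α) :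
    radius B ≤ radiusAt B v :=
  ciInf_le (bddBelow_range_radiusAt hne hB) v

theorem radius_nonneg (hne : B.Nonempty) (hB : Bornology.IsBounded B) : 0 ≤ radius B :=
  have : Nonempty α := ⟨hne.some⟩
  le_ciInf (radiusAt_nonneg hne hB)

theorem lipschitzWith_radiusAt (hne : B.Nonempty) (hB : Bornology.IsBounded B) :
    LipschitzWith 1 (radiusAt B) :=
  LipschitzWith.of_le_add fun u v => radiusAt_le hne fun w hw =>
    (dist_triangle u v w).trans (by linarith [dist_le_radiusAt (v := v) hB hw])

end PseudoMetric

section InnerProductSpace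

variable {E : Type*} [NormedAddCommGroup E] [InnerProductSpace ℝ E] {B : Set E}

theorem four_mul_radiusAt_midpoint_sq_add_dist_sq_le (hne : B.Nonempty)
    (hB : Bornology.IsBounded B) (u v : E) :
    4 * radiusAt B (midpoint ℝ u v) ^ 2 + dist u v ^ 2 ≤
      2 * radiusAt B u ^ 2 + 2 * radiusAt B v ^ 2 := by
  set K := 2 * radiusAt B u ^ 2 + 2 * radiusAt B v ^ 2 - dist u v ^ 2
  have hmid : ∀ w ∈ B, 4 * dist (midpoint ℝ u v) w ^ 2 ≤ K := fun w hw => by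
    have := EuclideanGeometry.dist_sq_add_dist_sq_eq_two_mul_dist_midpoint_sq_add_half_dist_sq w u v
    simp only [dist_comm w] at this
    nlinarith [dist_le_radiusAt (v := u) hB hw, dist_le_radiusAt (v := v) hB hw,
      dist_nonneg (x := u) (y := w), dist_nonneg (x := v) (y := w)]
  have hK : 0 ≤ K := (by positivity : (0 : ℝ) ≤ 4 * _ ^ 2).trans (hmid _ hne.some_mem)
  have hm : radiusAt B (midpoint ℝ u v) ≤ √K / 2 := radiusAt_le hne fun w hw => by
    rw [le_div_iff₀ two_pos, Real.le_sqrt (by positivity) hK]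
    linarith [hmid w hw]
  have := pow_le_pow_left₀ (radiusAt_nonneg hne hB _) hm 2
  rw [div_pow, Real.sq_sqrt hK] at this
  linarith

theorem dist_sq_add_four_mul_radius_sq_le (hne : B.Nonempty) (hB : Bornology.IsBounded B)
    (u v : E) :
    dist u v ^ 2 + 4 * radius B ^ 2 ≤ 2 * radiusAt B u ^ 2 + 2 * radiusAt B v ^ 2 := by
  have := pow_le_pow_left₀ (radius_nonneg hne hB) (radius_le_radiusAt hne hB (midpoint ℝ u v)) 2
  linarith [four_mul_radiusAt_midpoint_sq_add_dist_sq_le hne hB u v]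

end InnerProductSpace

end Chebyshev

open Chebyshev in
/-- Existence and uniqueness of the Chebyshev (geometric) center of a nonempty bounded subset
of a real Hilbert space, together with its characterization as the unique point `c` such that
`B ⊆ closedBall c r_B`. -/
theorem chebyshev_center_exists_unique
    {H : Type*} [NormedAddCommGroup H] [InnerProductSpace ℝ H] [CompleteSpace H]
    (B : Set H) (hB : B.Nonempty) (hBbdd : Bornology.IsBounded B) :
    (∃! c : H, (⨆ w ∈ B, dist c w) = ⨅ v : H, ⨆ w ∈ B, dist v w) ∧
    (∀ c : H, (⨆ w ∈ B, dist c w) = (⨅ v : H, ⨆ w ∈ B, dist v w) ↔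
      B ⊆ Metric.closedBall c (⨅ v : H, ⨆ w ∈ B, dist v w)) := by
  show (∃! c, radiusAt B c = radius B) ∧
    ∀ c, radiusAt B c = radius B ↔ B ⊆ closedBall c (radius B)
  refine ⟨existsUnique_eq_ciInf_of_dist_sq_le (lipschitzWith_radiusAt hB hBbdd).continuous
    (bddBelow_range_radiusAt hB hBbdd) (dist_sq_add_four_mul_radius_sq_le hB hBbdd), fun c => ?_⟩
  rw [← radiusAt_le_iff_subset_closedBall hB hBbdd]
  exact ⟨le_of_eq, fun h => h.antisymm (radius_le_radiusAt hB hBbdd c)⟩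
end

section
/- Let H be a real Hilbert space and let Γ be a monoid acting on H such that for each g ∈ Γ the map v ↦ g·v is an isometry of H (it preserves distances; surjectivity is not assumed). If some orbit {g·v₀ : g ∈ Γ} is bounded, then there exists a point p ∈ H fixed by every element of Γ, i.e., g·p = p for all g ∈ Γ. -/
/-!
Let `Q x = sup_g ‖g • x - v₀‖²`, which is finite because the orbit of `v₀` is bounded.
Isometries of a Hilbert space are affine, so the parallelogram law gives
`Q (midpoint x y) + ‖x - y‖² / 4 ≤ (Q x + Q y) / 2`; hence minimizing sequences of `Q` are Cauchy,
and the lower semicontinuous `Q` attains its infimum at a unique point `p`.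
Since `Q (h • x) = sup_g ‖(g * h) • x - v₀‖² ≤ Q x`, the point `h • p` is again a minimizer,
so `h • p = p`. Measuring the orbit of `x` from `v₀`, instead of measuring the orbit of `v₀`
from `x` as in the circumcenter argument, is what removes the need for surjectivity.
-/

open Set Filter Topology

def MidpointStrongConvex {E : Type*} [NormedAddCommGroup E] [NormedSpace ℝ E] (q : E → ℝ) :
    Prop :=
  ∀ x y, q (midpoint ℝ x y) + dist x y ^ 2 / 4 ≤ (q x + q y) / 2

namespace MidpointStrongConvex

variable {E : Type*} [NormedAddCommGroup E] [NormedSpace ℝ E] {q : E → ℝ}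

theorem eq_of_le_of_forall_le (hq : MidpointStrongConvex q) {p y : E}
    (hp : ∀ x, q p ≤ q x) (hy : q y ≤ q p) : y = p := by
  have hmid := hq y p
  have hmin := hp (midpoint ℝ y p)
  have hsq : dist y p ^ 2 ≤ 0 := by linarith
  exact dist_eq_zero.mp ((sq_nonpos_iff _).mp hsq)

theorem exists_forall_le [CompleteSpace E] (hq : MidpointStrongConvex q)
    (hlsc : LowerSemicontinuous q) (hbdd : BddBelow (range q)) : ∃ p, ∀ x, q p ≤ q x := by
  obtain ⟨u, hu_anti, hu_lim, hu_mem⟩ := exists_seq_tendsto_sInf (range_nonempty q) hbdd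
  choose x hx using hu_mem
  set m := sInf (range q)
  have hm : ∀ y, m ≤ q y := fun y => csInf_le hbdd ⟨y, rfl⟩
  have hdist : ∀ n k N, N ≤ n → N ≤ k → dist (x n) (x k) ≤ √(4 * (u N - m)) := by
    intro n k N hn hk
    have hmid := hq (x n) (x k)
    have hmin := hm (midpoint ℝ (x n) (x k))
    have hun := hu_anti hn
    have huk := hu_anti hk
    refine Real.le_sqrt_of_sq_le ?_
    rw [hx, hx] at hmid
    linarith
  have hb : Tendsto (fun N => √(4 * (u N - m))) atTop (𝓝 0) := by
    simpa using ((hu_lim.sub_const m).const_mul 4).sqrt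
  obtain ⟨p, hp⟩ := cauchySeq_tendsto_of_complete (cauchySeq_of_le_tendsto_0 _ hdist hb)
  have hpu : ∀ N, q p ≤ u N := fun N =>
    (hlsc.isClosed_preimage (u N)).mem_of_tendsto hp
      (eventually_atTop.2 ⟨N, fun n hn => (hx n).trans_le (hu_anti hn)⟩)
  exact ⟨p, fun y => (ge_of_tendsto' hu_lim hpu).trans (hm y)⟩

theorem comp_isometry {F : Type*} [NormedAddCommGroup F] [NormedSpace ℝ F]
    [StrictConvexSpace ℝ F] {q : F → ℝ} (hq : MidpointStrongConvex q) {f : E → F}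
    (hf : Isometry f) : MidpointStrongConvex (q ∘ f) := fun x y => by
  have hmid : f (midpoint ℝ x y) = midpoint ℝ (f x) (f y) :=
    hf.affineIsometryOfStrictConvexSpace.toAffineMap.map_midpoint x y
  simpa only [Function.comp_apply, hmid, hf.dist_eq] using hq (f x) (f y)

theorem ciSup {ι : Type*} [Nonempty ι] {q : ι → E → ℝ} (hq : ∀ i, MidpointStrongConvex (q i))
    (hbdd : ∀ x, BddAbove (range fun i => q i x)) :
    MidpointStrongConvex fun x => ⨆ i, q i x := fun x y => by
  have hle : ⨆ i, q i (midpoint ℝ x y) ≤ ((⨆ i, q i x) + ⨆ i, q i y) / 2 - dist x y ^ 2 / 4 :=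
    ciSup_le fun i => by
      linarith [hq i x y, le_ciSup (hbdd x) i, le_ciSup (hbdd y) i]
  linarith

end MidpointStrongConvex

theorem midpointStrongConvex_dist_sq {E : Type*} [NormedAddCommGroup E] [InnerProductSpace ℝ E]
    (c : E) : MidpointStrongConvex fun x => dist x c ^ 2 := fun x y => by
  have := EuclideanGeometry.dist_sq_add_dist_sq_eq_two_mul_dist_midpoint_sq_add_half_dist_sq c x y
  simp only [dist_comm c] at this
  linarith

section OrbitRadius

variable {ι E : Type*}

noncomputable def orbitRadiusSq [PseudoMetricSpace E] (f : ι → E → E) (v₀ x : E) : ℝ :=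
  ⨆ i, dist (f i x) v₀ ^ 2

variable [PseudoMetricSpace E] {f : ι → E → E} {v₀ : E}

theorem orbitRadiusSq_nonneg (x : E) : 0 ≤ orbitRadiusSq f v₀ x :=
  Real.iSup_nonneg fun _ => sq_nonneg _

theorem bddAbove_range_dist_sq_orbit (hf : ∀ i, Isometry (f i))
    (hbdd : Bornology.IsBounded (range fun i => f i v₀)) (x : E) :
    BddAbove (range fun i => dist (f i x) v₀ ^ 2) := by
  obtain ⟨C, hC⟩ := hbdd.subset_closedBall v₀
  refine ⟨(dist x v₀ + C) ^ 2, forall_mem_range.2 fun i => ?_⟩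
  have hfi : dist (f i v₀) v₀ ≤ C := hC (mem_range_self i)
  have : dist (f i x) v₀ ≤ dist x v₀ + C :=
    calc dist (f i x) v₀ ≤ dist (f i x) (f i v₀) + dist (f i v₀) v₀ := dist_triangle _ _ _
      _ ≤ dist x v₀ + C := by rw [(hf i).dist_eq]; gcongr
  gcongr

theorem lowerSemicontinuous_orbitRadiusSq (hf : ∀ i, Isometry (f i))
    (hbdd : Bornology.IsBounded (range fun i => f i v₀)) :
    LowerSemicontinuous (orbitRadiusSq f v₀) :=
  lowerSemicontinuous_ciSup (bddAbove_range_dist_sq_orbit hf hbdd) fun i =>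
    (((hf i).continuous.dist continuous_const).pow 2).lowerSemicontinuous

theorem orbitRadiusSq_apply_le {Γ : Type*} [Mul Γ] {act : Γ → E → E}
    (hact_mul : ∀ g h x, act (g * h) x = act g (act h x)) (hf : ∀ g, Isometry (act g))
    (hbdd : Bornology.IsBounded (range fun g => act g v₀)) (h : Γ) (x : E) :
    orbitRadiusSq act v₀ (act h x) ≤ orbitRadiusSq act v₀ x :=
  Real.iSup_le (fun g => by
      rw [← hact_mul]; exact le_ciSup (bddAbove_range_dist_sq_orbit hf hbdd x) (g * h))
    (orbitRadiusSq_nonneg x)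

end OrbitRadius

theorem midpointStrongConvex_orbitRadiusSq {ι E : Type*} [Nonempty ι] [NormedAddCommGroup E]
    [InnerProductSpace ℝ E] {f : ι → E → E} {v₀ : E} (hf : ∀ i, Isometry (f i))
    (hbdd : Bornology.IsBounded (range fun i => f i v₀)) :
    MidpointStrongConvex (orbitRadiusSq f v₀) :=
  MidpointStrongConvex.ciSup (fun i => (midpointStrongConvex_dist_sq v₀).comp_isometry (hf i))
    (bddAbove_range_dist_sq_orbit hf hbdd)

theorem bruhat_tits_monoid_general
    {H : Type*} [NormedAddCommGroup H] [InnerProductSpace ℝ H] [CompleteSpace H]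
    {Γ : Type*} [Monoid Γ]
    (act : Γ → H → H)
    (hact_mul : ∀ f g v, act (f * g) v = act f (act g v))
    (hiso : ∀ g a b, dist (act g a) (act g b) = dist a b)
    (v₀ : H) (hbdd : Bornology.IsBounded (Set.range fun g => act g v₀)) :
    ∃ p : H, ∀ g, act g p = p := by
  have hisom : ∀ g, Isometry (act g) := fun g => Isometry.of_dist_eq (hiso g)
  have hQ : MidpointStrongConvex (orbitRadiusSq act v₀) :=
    midpointStrongConvex_orbitRadiusSq hisom hbdd
  obtain ⟨p, hp⟩ := hQ.exists_forall_le (lowerSemicontinuous_orbitRadiusSq hisom hbdd)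
    ⟨0, forall_mem_range.2 orbitRadiusSq_nonneg⟩
  exact ⟨p, fun g => hQ.eq_of_le_of_forall_le hp (orbitRadiusSq_apply_le hact_mul hisom hbdd g p)⟩

/-- **Bruhat–Tits center lemma, semigroup version**: a monoid acting on a real Hilbert space
by (not necessarily surjective) distance-preserving maps with a bounded orbit has a global
fixed point. -/
theorem bruhat_tits_monoid
    {H : Type*} [NormedAddCommGroup H] [InnerProductSpace ℝ H] [CompleteSpace H]
    {Γ : Type*} [Monoid Γ]
    (act : Γ → H → H)
    (hact_one : ∀ v, act 1 v = v)
    (hact_mul : ∀ f g v, act (f * g) v = act f (act g v))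
    (hiso : ∀ g a b, dist (act g a) (act g b) = dist a b)
    (v₀ : H) (hbdd : Bornology.IsBounded (Set.range fun g => act g v₀)) :
    ∃ p : H, ∀ g, act g p = p :=
  bruhat_tits_monoid_general act hact_mul hiso v₀ hbdd
end

section
/- Let X be a compact metric space and Γ a monoid acting on X by continuous maps. Let ℓ ≥ 1 and let (Ψ, ρ) be a cocycle of affine isometries of Euclidean space ℝ^ℓ over this action: Ψ : Γ × X → (linear isometric equivalences of ℝ^ℓ) and ρ : Γ × X → ℝ^ℓ satisfy Ψ(fg,x) = Ψ(f,g·x) ∘ Ψ(g,x) and ρ(fg,x) = ρ(f,g·x) + Ψ(f,g·x)(ρ(g,x)), with x ↦ Ψ(f,x) continuous in operator norm and x ↦ ρ(f,x) continuous, for each f ∈ Γ. Assume there is a constant C with ‖ρ(f,x)‖ ≤ C for all f ∈ Γ and x ∈ X. For x ∈ X, define the recurrence set R_x as the set of pairs (U, b), with U a linear isometric equivalence of ℝ^ℓ and b ∈ ℝ^ℓ, such that there exists a sequence (f_k) in Γ with f_k·x → x, ‖Ψ(f_k,x) − U‖ → 0 and ‖ρ(f_k,x) − b‖ → 0. Then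 R_x is a semigroup under composition of affine maps: if (U₁, b₁) and (U₂, b₂) belong to R_x, then (U₁ ∘ U₂, U₁(b₂) + b₁) belongs to R_x. -/
open Filter Topology

/-- The pair `(U, b)` (an affine isometry `v ↦ U v + b` of `ℝ^ℓ`) belongs to the recurrence
set `R_x` of the cocycle `(Ψ, ρ)` at the point `x`: there is a sequence `(f_k)` in `Γ` with
`f_k · x → x`, `Ψ(f_k, x) → U` in operator norm, and `ρ(f_k, x) → b`. -/
def InRecurrenceSet {X : Type*} [MetricSpace X] {Γ : Type*} {l : ℕ}
    (act : Γ → X → X)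
    (Ψ : Γ → X → (EuclideanSpace ℝ (Fin l) ≃ₗᵢ[ℝ] EuclideanSpace ℝ (Fin l)))
    (ρ : Γ → X → EuclideanSpace ℝ (Fin l)) (x : X)
    (U : EuclideanSpace ℝ (Fin l) ≃ₗᵢ[ℝ] EuclideanSpace ℝ (Fin l))
    (b : EuclideanSpace ℝ (Fin l)) : Prop :=
  ∃ f : ℕ → Γ,
    Tendsto (fun k => act (f k) x) atTop (𝓝 x) ∧
    Tendsto (fun k =>
      ‖((Ψ (f k) x).toLinearIsometry.toContinuousLinearMap -
          U.toLinearIsometry.toContinuousLinearMap :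
        EuclideanSpace ℝ (Fin l) →L[ℝ] EuclideanSpace ℝ (Fin l))‖) atTop (𝓝 0) ∧
    Tendsto (fun k => ρ (f k) x) atTop (𝓝 b)

section Aux

variable {l : ℕ}

lemma aux_comp_iso_left (J : EuclideanSpace ℝ (Fin l) ≃ₗᵢ[ℝ] EuclideanSpace ℝ (Fin l))
    (B : EuclideanSpace ℝ (Fin l) →L[ℝ] EuclideanSpace ℝ (Fin l)) :
    ‖(J.toLinearIsometry.toContinuousLinearMap).comp B‖ ≤ ‖B‖ := by
  refine ContinuousLinearMap.opNorm_le_bound _ (norm_nonneg B) fun v => ?_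
  simp only [ContinuousLinearMap.comp_apply, LinearIsometry.coe_toContinuousLinearMap,
    LinearIsometryEquiv.coe_toLinearIsometry, LinearIsometryEquiv.norm_map]
  exact B.le_opNorm v

lemma aux_comp_iso_right (J : EuclideanSpace ℝ (Fin l) ≃ₗᵢ[ℝ] EuclideanSpace ℝ (Fin l))
    (B : EuclideanSpace ℝ (Fin l) →L[ℝ] EuclideanSpace ℝ (Fin l)) :
    ‖B.comp (J.toLinearIsometry.toContinuousLinearMap)‖ ≤ ‖B‖ := by
  refine ContinuousLinearMap.opNorm_le_bound _ (norm_nonneg B) fun v => ?_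
  simp only [ContinuousLinearMap.comp_apply, LinearIsometry.coe_toContinuousLinearMap,
    LinearIsometryEquiv.coe_toLinearIsometry]
  calc ‖B (J v)‖ ≤ ‖B‖ * ‖J v‖ := B.le_opNorm _
    _ = ‖B‖ * ‖v‖ := by rw [LinearIsometryEquiv.norm_map]

end Aux

/-- The recurrence set `R_x` of a bounded cocycle of affine isometries of Euclidean space
`ℝ^ℓ` over a monoid action on a compact metric space is a semigroup under composition of
affine maps. -/
theorem recurrence_set_is_semigroup
    {X : Type*} [MetricSpace X] [CompactSpace X]
    {Γ : Type*} [Monoid Γ] {l : ℕ} (hl : 1 ≤ l)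
    (act : Γ → X → X)
    (hact_one : ∀ x, act 1 x = x)
    (hact_mul : ∀ f g x, act (f * g) x = act f (act g x))
    (hact_cont : ∀ f, Continuous (act f))
    (Ψ : Γ → X → (EuclideanSpace ℝ (Fin l) ≃ₗᵢ[ℝ] EuclideanSpace ℝ (Fin l)))
    (ρ : Γ → X → EuclideanSpace ℝ (Fin l))
    (hΨ_cont : ∀ f, Continuous fun x =>
      ((Ψ f x).toLinearIsometry.toContinuousLinearMap :
        EuclideanSpace ℝ (Fin l) →L[ℝ] EuclideanSpace ℝ (Fin l)))
    (hρ_cont : ∀ f, Continuous fun x => ρ f x)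
    (hΨ_coc : ∀ f g x v, Ψ (f * g) x v = Ψ f (act g x) (Ψ g x v))
    (hρ_coc : ∀ f g x, ρ (f * g) x = ρ f (act g x) + Ψ f (act g x) (ρ g x))
    (C : ℝ) (hbdd : ∀ f x, ‖ρ f x‖ ≤ C)
    (x : X)
    (U₁ U₂ : EuclideanSpace ℝ (Fin l) ≃ₗᵢ[ℝ] EuclideanSpace ℝ (Fin l))
    (b₁ b₂ : EuclideanSpace ℝ (Fin l))
    (h₁ : InRecurrenceSet act Ψ ρ x U₁ b₁)
    (h₂ : InRecurrenceSet act Ψ ρ x U₂ b₂) :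
    InRecurrenceSet act Ψ ρ x (U₂.trans U₁) (U₁ b₂ + b₁) := by
    classical
  obtain ⟨f, hf_act, hf_Ψ, hf_ρ⟩ := h₁
  obtain ⟨g, hg_act, hg_Ψ, hg_ρ⟩ := h₂
  set A : Γ → X → (EuclideanSpace ℝ (Fin l) →L[ℝ] EuclideanSpace ℝ (Fin l)) :=
    fun f x => (Ψ f x).toLinearIsometry.toContinuousLinearMap with hA
  set V1 : EuclideanSpace ℝ (Fin l) →L[ℝ] EuclideanSpace ℝ (Fin l) :=
    U₁.toLinearIsometry.toContinuousLinearMap with hV1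
  set V2 : EuclideanSpace ℝ (Fin l) →L[ℝ] EuclideanSpace ℝ (Fin l) :=
    U₂.toLinearIsometry.toContinuousLinearMap with hV2
  have hε : ∀ m : ℕ, (0 : ℝ) < 1 / (m + 1) := fun m => by positivity
  have h0 : Tendsto (fun m : ℕ => 1 / (m + 1 : ℝ)) atTop (𝓝 0) :=
    tendsto_one_div_add_atTop_nhds_zero_nat
  have key : ∀ m : ℕ, ∃ k : ℕ,
      dist (act (f m) (act (g k) x)) (act (f m) x) < 1 / (m + 1) ∧
      ‖A (f m) (act (g k) x) - A (f m) x‖ < 1 / (m + 1) ∧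
      ‖ρ (f m) (act (g k) x) - ρ (f m) x‖ < 1 / (m + 1) ∧
      ‖A (g k) x - V2‖ < 1 / (m + 1) ∧
      ‖ρ (g k) x - b₂‖ < 1 / (m + 1) := by
    intro m
    have e1 : Tendsto (fun k => act (f m) (act (g k) x)) atTop (𝓝 (act (f m) x)) :=
      ((hact_cont (f m)).continuousAt.tendsto).comp hg_act
    have e2 : Tendsto (fun k => A (f m) (act (g k) x)) atTop (𝓝 (A (f m) x)) :=
      ((hΨ_cont (f m)).continuousAt.tendsto).comp hg_act
    have e3 : Tendsto (fun k => ρ (f m) (act (g k) x)) atTop (𝓝 (ρ (f m) x)) :=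
      ((hρ_cont (f m)).continuousAt.tendsto).comp hg_act
    have E1 := Metric.tendsto_nhds.mp e1 _ (hε m)
    have E2 := Metric.tendsto_nhds.mp e2 _ (hε m)
    have E3 := Metric.tendsto_nhds.mp e3 _ (hε m)
    have E4 := Metric.tendsto_nhds.mp hg_Ψ _ (hε m)
    have E5 := Metric.tendsto_nhds.mp hg_ρ _ (hε m)
    have := ((((E1.and E2).and E3).and E4).and E5).exists
    obtain ⟨k, ⟨⟨⟨hk1, hk2⟩, hk3⟩, hk4⟩, hk5⟩ := this
    refine ⟨k, hk1, ?_, ?_, ?_, ?_⟩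
    · rw [← dist_eq_norm]; exact hk2
    · rw [← dist_eq_norm]; exact hk3
    · have h' : ‖A (g k) x - V2‖ = dist ‖A (g k) x - V2‖ 0 := by
        rw [Real.dist_eq, sub_zero, abs_of_nonneg (norm_nonneg _)]
      rw [h']; exact hk4
    · rw [← dist_eq_norm]; exact hk5
  choose k hk using key
  refine ⟨fun m => f m * g (k m), ?_, ?_, ?_⟩
  · rw [tendsto_iff_dist_tendsto_zero]
    refine squeeze_zero (fun m => dist_nonneg) (g := fun m : ℕ =>
      1 / (m + 1 : ℝ) + dist (act (f m) x) x) (fun m => ?_) ?_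
    · rw [hact_mul]
      calc dist (act (f m) (act (g (k m)) x)) x
          ≤ dist (act (f m) (act (g (k m)) x)) (act (f m) x) + dist (act (f m) x) x :=
            dist_triangle _ _ _
        _ ≤ 1 / (m + 1 : ℝ) + dist (act (f m) x) x := by
            have := (hk m).1; linarith
    · simpa using h0.add (tendsto_iff_dist_tendsto_zero.mp hf_act)
  · have hcomp : ∀ m, A (f m * g (k m)) x =
        (A (f m) (act (g (k m)) x)).comp (A (g (k m)) x) := by
      intro m
      refine ContinuousLinearMap.ext fun v => ?_
      simpa [hA] using hΨ_coc (f m) (g (k m)) x v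
    have hT : (U₂.trans U₁).toLinearIsometry.toContinuousLinearMap = V1.comp V2 := by
      refine ContinuousLinearMap.ext fun v => ?_
      simp [hV1, hV2]
    refine squeeze_zero (fun m => norm_nonneg _) (g := fun m : ℕ =>
      1 / (m + 1 : ℝ) + 1 / (m + 1 : ℝ) + ‖A (f m) x - V1‖) (fun m => ?_) ?_
    · show ‖A (f m * g (k m)) x - (U₂.trans U₁).toLinearIsometry.toContinuousLinearMap‖ ≤ _
      rw [hcomp, hT]
      set P := A (f m) (act (g (k m)) x)
      set P0 := A (f m) x
      set Q := A (g (k m)) x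
      have heq : P.comp Q - V1.comp V2 =
          P.comp (Q - V2) + ((P - P0).comp V2 + (P0 - V1).comp V2) := by
        simp only [ContinuousLinearMap.comp_sub, ContinuousLinearMap.sub_comp]
        abel
      rw [heq]
      have t1 : ‖P.comp (Q - V2)‖ ≤ ‖Q - V2‖ := aux_comp_iso_left _ _
      have t2 : ‖(P - P0).comp V2‖ ≤ ‖P - P0‖ := aux_comp_iso_right _ _
      have t3 : ‖(P0 - V1).comp V2‖ ≤ ‖P0 - V1‖ := aux_comp_iso_right _ _
      have h4 := (hk m).2.2.2.1
      have h2 := (hk m).2.1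
      calc ‖P.comp (Q - V2) + ((P - P0).comp V2 + (P0 - V1).comp V2)‖
          ≤ ‖P.comp (Q - V2)‖ + (‖(P - P0).comp V2‖ + ‖(P0 - V1).comp V2‖) :=
            (norm_add_le _ _).trans (by gcongr; exact norm_add_le _ _)
        _ ≤ 1 / (m + 1 : ℝ) + 1 / (m + 1 : ℝ) + ‖P0 - V1‖ := by
            have w1 := t1.trans h4.le
            have w2 := t2.trans h2.le
            linarith
    · simpa only [add_zero] using (h0.add h0).add hf_Ψ
  · rw [tendsto_iff_norm_sub_tendsto_zero]
    refine squeeze_zero (fun m => norm_nonneg _) (g := fun m : ℕ =>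
      1 / (m + 1 : ℝ) + ‖ρ (f m) x - b₁‖ +
      (1 / (m + 1 : ℝ) + 1 / (m + 1 : ℝ) * ‖b₂‖ + ‖A (f m) x - V1‖ * ‖b₂‖))
      (fun m => ?_) ?_
    · set y := act (g (k m)) x with hy
      have hρeq : ρ (f m * g (k m)) x = ρ (f m) y + Ψ (f m) y (ρ (g (k m)) x) :=
        hρ_coc (f m) (g (k m)) x
      rw [hρeq]
      have heq : ρ (f m) y + Ψ (f m) y (ρ (g (k m)) x) - (U₁ b₂ + b₁) =
          (ρ (f m) y - ρ (f m) x) + (ρ (f m) x - b₁) +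
          (Ψ (f m) y (ρ (g (k m)) x) - U₁ b₂) := by abel
      rw [heq]
      have t3 : ‖Ψ (f m) y (ρ (g (k m)) x) - U₁ b₂‖ ≤
          1 / (m + 1 : ℝ) + 1 / (m + 1 : ℝ) * ‖b₂‖ + ‖A (f m) x - V1‖ * ‖b₂‖ := by
        have heq2 : Ψ (f m) y (ρ (g (k m)) x) - U₁ b₂ =
            Ψ (f m) y (ρ (g (k m)) x - b₂) + ((A (f m) y - A (f m) x) b₂ +
              (A (f m) x - V1) b₂) := by
          simp only [ContinuousLinearMap.sub_apply, hA, hV1,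
            LinearIsometry.coe_toContinuousLinearMap, LinearIsometryEquiv.coe_toLinearIsometry,
            map_sub]
          abel
        rw [heq2]
        have u1 : ‖Ψ (f m) y (ρ (g (k m)) x - b₂)‖ = ‖ρ (g (k m)) x - b₂‖ :=
          (Ψ (f m) y).norm_map _
        have u2 : ‖(A (f m) y - A (f m) x) b₂‖ ≤ ‖A (f m) y - A (f m) x‖ * ‖b₂‖ :=
          ContinuousLinearMap.le_opNorm _ _
        have u3 : ‖(A (f m) x - V1) b₂‖ ≤ ‖A (f m) x - V1‖ * ‖b₂‖ :=
          ContinuousLinearMap.le_opNorm _ _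
        have h5 := (hk m).2.2.2.2
        have h2 := (hk m).2.1
        have hb2 : (0:ℝ) ≤ ‖b₂‖ := norm_nonneg _
        calc ‖Ψ (f m) y (ρ (g (k m)) x - b₂) + ((A (f m) y - A (f m) x) b₂ +
              (A (f m) x - V1) b₂)‖
            ≤ ‖Ψ (f m) y (ρ (g (k m)) x - b₂)‖ + (‖(A (f m) y - A (f m) x) b₂‖ +
              ‖(A (f m) x - V1) b₂‖) :=
              (norm_add_le _ _).trans (by gcongr; exact norm_add_le _ _)
          _ ≤ 1 / (m + 1 : ℝ) + 1 / (m + 1 : ℝ) * ‖b₂‖ + ‖A (f m) x - V1‖ * ‖b₂‖ := by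
              rw [u1]
              have w : ‖A (f m) y - A (f m) x‖ * ‖b₂‖ ≤ 1 / (m + 1 : ℝ) * ‖b₂‖ :=
                mul_le_mul_of_nonneg_right h2.le hb2
              nlinarith [u2, u3]
      have t1 := (hk m).2.2.1
      calc ‖(ρ (f m) y - ρ (f m) x) + (ρ (f m) x - b₁) +
            (Ψ (f m) y (ρ (g (k m)) x) - U₁ b₂)‖
          ≤ ‖ρ (f m) y - ρ (f m) x‖ + ‖ρ (f m) x - b₁‖ +
            ‖Ψ (f m) y (ρ (g (k m)) x) - U₁ b₂‖ := norm_add₃_le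
        _ ≤ _ := by linarith [t1, t3]
    · have hb1 : Tendsto (fun m => ‖ρ (f m) x - b₁‖) atTop (𝓝 0) :=
        tendsto_iff_norm_sub_tendsto_zero.mp hf_ρ
      have := (h0.add hb1).add ((h0.add (h0.mul_const ‖b₂‖)).add (hf_Ψ.mul_const ‖b₂‖))
      simpa only [zero_mul, add_zero, zero_add] using this
end
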